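/- arXiv:2001.02118 — 8 statements merged into one kernel-verified Lean document; each statement's English description precedes it below -/
import Mathlib

section
/- Let V and W be real Hilbert spaces, let C ⊆ V and D ⊆ W be nonempty closed convex sets, let f₀ : V → ℝ and g₀ : W → ℝ be convex continuous functions, and let φ : V × W → ℝ be a convex Fréchet-differentiable function. Suppose Q and Q̂ are bounded self-adjoint positive semidefinite linear operators on V × W such that for all z, z' ∈ V × W one has φ(z) ≥ φ(z') + ⟨∇φ(z'), z − z'⟩ + ½⟨z − z', Q(z − z')⟩ and φ(z) ≤ φ̂(z; z') := φ(z') + ⟨∇φ(z'), z − z'⟩ + ½⟨z − z', Q̂(z − z')⟩. Suppose Q̂ = Q + Diag(D₁, D₂) where D₁ : V → V and D₂ : W → W are bounded self-adjoint positive semidefinite operators, and suppose there exist constants c₁, c₂ > 0 such that the diagonal blocks satisfy ⟨v, Q̂₁₁ v⟩ ≥ c₁‖v‖² for all v ∈ V and ⟨w, Q̂₂₂ w⟩ ≥ c₂‖w‖² for all w ∈ W. Define θ(v, w) = f₀(v) + g₀(w) + φ(v, w). Let t₁ = 1, t_{k+1} = (1 + √(1 + 4 t_k²))/2 and β_k =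 (t_k − 1)/t_{k+1}. Given a starting point z⁰ = (v⁰, w⁰) ∈ C × D with z̃¹ = z⁰, suppose the sequences satisfy: v^k is a minimizer over C of v ↦ f₀(v) + φ̂((v, w̃^k); z̃^k), w^k is a minimizer over D of w ↦ g₀(w) + φ̂((v^k, w); z̃^k), and z̃^{k+1} = z^k + β_k (z^k − z^{k−1}) where z^k = (v^k, w^k). If z* = (v*, w*) minimizes θ over C × D, then for every k ≥ 1, θ(z^k) − θ(z*) ≤ 2‖z⁰ − z*‖²_S / (k + 1)², where S = Diag(D₁, D₂ + Q₂₂), Q₂₂ is the (2,2)-block of Q, and ‖z‖²_S = ⟨z, S z⟩. -/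
open scoped InnerProductSpace

/-- The (non-normed) inner product on the product of two real inner product spaces. -/
noncomputable def prodInner {V W : Type*} [NormedAddCommGroup V] [InnerProductSpace ℝ V]
    [NormedAddCommGroup W] [InnerProductSpace ℝ W] (x y : V × W) : ℝ :=
  ⟪x.1, y.1⟫_ℝ + ⟪x.2, y.2⟫_ℝ

section PIAPI

variable {V W : Type*} [NormedAddCommGroup V] [InnerProductSpace ℝ V]
  [NormedAddCommGroup W] [InnerProductSpace ℝ W]

lemma prodInner_comm (x y : V × W) : prodInner x y = prodInner y x := by
  simp [prodInner, real_inner_comm]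

lemma prodInner_add_left (x y z : V × W) :
    prodInner (x + y) z = prodInner x z + prodInner y z := by
  simp [prodInner, inner_add_left]; ring

lemma prodInner_add_right (x y z : V × W) :
    prodInner x (y + z) = prodInner x y + prodInner x z := by
  simp [prodInner, inner_add_right]; ring

lemma prodInner_smul_left (r : ℝ) (x y : V × W) :
    prodInner (r • x) y = r * prodInner x y := by
  simp [prodInner, real_inner_smul_left]; ring

lemma prodInner_smul_right (r : ℝ) (x y : V × W) :
    prodInner x (r • y) = r * prodInner x y := by
  simp [prodInner, real_inner_smul_right]; ring

lemma prodInner_sub_left (x y z : V × W) :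
    prodInner (x - y) z = prodInner x z - prodInner y z := by
  simp [prodInner, inner_sub_left]; ring

lemma prodInner_sub_right (x y z : V × W) :
    prodInner x (y - z) = prodInner x y - prodInner x z := by
  simp [prodInner, inner_sub_right]; ring

end PIAPI

lemma le_of_small {K c : ℝ} (h : ∀ l : ℝ, 0 < l → l < 1 → 0 ≤ K + l * c) : 0 ≤ K := by
  rcases le_or_gt c 0 with hc | hc
  · have := h (1/2) (by norm_num) (by norm_num)
    nlinarith
  · by_contra hK
    push_neg at hK
    have hl1 : (0:ℝ) < -K / (2 * c) := div_pos (by linarith) (by linarith)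
    set l := min (1/2) (-K / (2 * c)) with hl
    have h0 : 0 < l := lt_min (by norm_num) hl1
    have h1 : l < 1 := lt_of_le_of_lt (min_le_left _ _) (by norm_num)
    have h2 : l * c ≤ -K / 2 := by
      have : l ≤ -K / (2 * c) := min_le_right _ _
      calc l * c ≤ (-K / (2 * c)) * c := by nlinarith
        _ = -K / 2 := by field_simp
    have := h l h0 h1
    nlinarith

section Bilin

variable {E : Type*} [AddCommGroup E] [Module ℝ E]

/-- FISTA telescoping identity for an abstract symmetric bilinear form. -/
lemma bilin_fista (b : E → E → ℝ)
    (badd : ∀ x y z, b (x + y) z = b x z + b y z)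
    (bsmul : ∀ (r : ℝ) (x y : E), b (r • x) y = r * b x y)
    (bsymm : ∀ x y, b x y = b y x)
    (tt : ℝ) (P Z Y q : E) :
    tt * (tt - 1) * (b (P - Y) (P - Y) - b (Z - Y) (Z - Y))
      + tt * (b (P - q) (P - q) - b (Z - q) (Z - q))
    = b (tt • P - (tt - 1) • Y - q) (tt • P - (tt - 1) • Y - q)
      - b (tt • Z - (tt - 1) • Y - q) (tt • Z - (tt - 1) • Y - q) := by
  have badd' : ∀ x y z, b x (y + z) = b x y + b x z := fun x y z => by
    rw [bsymm, badd, bsymm y x, bsymm z x]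
  have bsmul' : ∀ (r : ℝ) (x y : E), b x (r • y) = r * b x y := fun r x y => by
    rw [bsymm, bsmul, bsymm]
  have bneg : ∀ x y, b (-x) y = - b x y := fun x y => by
    rw [← neg_one_smul ℝ x, bsmul]; ring
  have bneg' : ∀ x y, b x (-y) = - b x y := fun x y => by
    rw [bsymm, bneg, bsymm]
  have bsub : ∀ x y z, b (x - y) z = b x z - b y z := fun x y z => by
    rw [sub_eq_add_neg, badd, bneg]; ring
  have bsub' : ∀ x y z, b x (y - z) = b x y - b x z := fun x y z => by
    rw [bsymm, bsub, bsymm y x, bsymm z x]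
  simp only [bsub, bsub', badd, badd', bsmul, bsmul']
  simp only [bsymm Z P, bsymm Y P, bsymm Y Z, bsymm q P, bsymm q Z, bsymm q Y]
  ring

/-- The quadratic identity behind the one-step estimate. -/
lemma quad_id1 (b : E → E → ℝ)
    (badd : ∀ x y z, b (x + y) z = b x z + b y z)
    (bsmul : ∀ (r : ℝ) (x y : E), b (r • x) y = r * b x y)
    (bsymm : ∀ x y, b x y = b y x)
    (e1 e2 f1 f2 : E) :
    - b (e1 + f1) (e1 + f1) + b e1 e1 + b (e2 + f1) (e2 + f1) - b e2 e2
        - b (e1 - e2) (e1 - e2) - b (f1 - f2) (f1 - f2)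
      = b f1 f1 - b (f2 - f1) (f2 - f1) - b (e1 - e2 + f1) (e1 - e2 + f1) := by
  have badd' : ∀ x y z, b x (y + z) = b x y + b x z := fun x y z => by
    rw [bsymm, badd, bsymm y x, bsymm z x]
  have bneg : ∀ x y, b (-x) y = - b x y := fun x y => by
    rw [← neg_one_smul ℝ x, bsmul]; ring
  have bneg' : ∀ x y, b x (-y) = - b x y := fun x y => by
    rw [bsymm, bneg, bsymm]
  have bsub : ∀ x y z, b (x - y) z = b x z - b y z := fun x y z => by
    rw [sub_eq_add_neg, badd, bneg]; ring
  have bsub' : ∀ x y z, b x (y - z) = b x y - b x z := fun x y z => by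
    rw [bsymm, bsub, bsymm y x, bsymm z x]
  simp only [bsub, bsub', badd, badd']
  simp only [bsymm e2 e1, bsymm f1 e1, bsymm f1 e2, bsymm f2 e1, bsymm f2 e2, bsymm f2 f1]
  ring

end Bilin

/-- Strong minimality: the minimizer of a convex function plus a psd quadratic (pulled
back by an affine map `ι`) over a convex set satisfies a strengthened optimality bound. -/
lemma strong_min_aux {V W : Type*} [NormedAddCommGroup V] [InnerProductSpace ℝ V]
    [NormedAddCommGroup W] [InnerProductSpace ℝ W]
    {E : Type*} [AddCommGroup E] [Module ℝ E]
    {C : Set E} (hC : Convex ℝ C) {f : E → ℝ} (hf : ConvexOn ℝ Set.univ f)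
    (g : V × W) (Qh : (V × W) →L[ℝ] (V × W))
    (hQhsa : ∀ x y : V × W, prodInner (Qh x) y = prodInner x (Qh y))
    (c : ℝ) (ι : E → V × W)
    (hι : ∀ (a b : E) (l : ℝ), ι ((1 - l) • a + l • b) = (1 - l) • ι a + l • ι b)
    {xs : E} (hxs : xs ∈ C)
    (hmin : IsMinOn (fun x : E => f x + (c + prodInner g (ι x)
      + (1 / 2) * prodInner (ι x) (Qh (ι x)))) C xs)
    {u : E} (hu : u ∈ C) :
    f xs + (c + prodInner g (ι xs) + (1 / 2) * prodInner (ι xs) (Qh (ι xs)))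
      + (1 / 2) * prodInner (ι u - ι xs) (Qh (ι u - ι xs))
      ≤ f u + (c + prodInner g (ι u) + (1 / 2) * prodInner (ι u) (Qh (ι u))) := by
  set A := ι xs with hA
  set e := ι u - ι xs with he
  have hBu : ι u = A + e := by rw [hA, he]; abel
  have hcross : prodInner e (Qh A) = prodInner A (Qh e) := by
    rw [← hQhsa, prodInner_comm]
  set pgA := prodInner g A with hpgA
  set pge := prodInner g e with hpge
  set qAA := prodInner A (Qh A) with hqAA
  set qAe := prodInner A (Qh e) with hqAe
  set qee := prodInner e (Qh e) with hqee
  have hexp1 : prodInner g (ι u) = pgA + pge := by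
    rw [hBu, prodInner_add_right]
  have hexp2 : prodInner (ι u) (Qh (ι u)) = qAA + 2 * qAe + qee := by
    rw [hBu, map_add, prodInner_add_left, prodInner_add_right, prodInner_add_right, hcross]
    ring
  have hKey : 0 ≤ f u - f xs + pge + qAe := by
    apply le_of_small (c := (1 / 2) * qee)
    intro l hl0 hl1
    set xl := (1 - l) • xs + l • u with hxl
    have hmem : xl ∈ C := hC hxs hu (by linarith) (le_of_lt hl0) (by ring)
    have hconv : f xl ≤ (1 - l) * f xs + l * f u :=
      hf.2 (Set.mem_univ xs) (Set.mem_univ u) (by linarith) (le_of_lt hl0) (by ring)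
    have hιl : ι xl = A + l • e := by
      rw [hxl, hι, hBu]; module
    have hm := isMinOn_iff.mp hmin xl hmem
    simp only [hιl] at hm
    have h1 : prodInner g (A + l • e) = pgA + l * pge := by
      rw [prodInner_add_right, prodInner_smul_right]
    have h2 : prodInner (A + l • e) (Qh (A + l • e))
        = qAA + 2 * l * qAe + l ^ 2 * qee := by
      rw [map_add, map_smul, prodInner_add_left, prodInner_add_right, prodInner_add_right,
        prodInner_smul_left, prodInner_smul_right, prodInner_smul_right, prodInner_smul_left,
        hcross]
      ring
    rw [h1, h2] at hm
    have hstep : 0 ≤ l * (f u - f xs + pge + qAe + l * ((1 / 2) * qee)) := by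
      nlinarith [hm, hconv]
    by_contra hneg
    push_neg at hneg
    nlinarith [hstep, hl0, hneg]
  rw [hexp1, hexp2]
  linarith [hKey]

set_option maxHeartbeats 1000000 in
/-- The `O(1/k²)` iteration-complexity theorem for the majorized accelerated block
coordinate descent (mABCD) method applied to
`min_{(v,w) ∈ C × D} f₀(v) + g₀(w) + φ(v, w)` in real Hilbert spaces. -/
theorem mABCD_complexity
    {V W : Type*} [NormedAddCommGroup V] [InnerProductSpace ℝ V] [CompleteSpace V]
    [NormedAddCommGroup W] [InnerProductSpace ℝ W] [CompleteSpace W]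
    (C : Set V) (D : Set W)
    (hCne : C.Nonempty) (hCcl : IsClosed C) (hCcv : Convex ℝ C)
    (hDne : D.Nonempty) (hDcl : IsClosed D) (hDcv : Convex ℝ D)
    (f₀ : V → ℝ) (g₀ : W → ℝ)
    (hf₀ : ConvexOn ℝ Set.univ f₀) (hf₀c : Continuous f₀)
    (hg₀ : ConvexOn ℝ Set.univ g₀) (hg₀c : Continuous g₀)
    (φ : V × W → ℝ) (hφ : ConvexOn ℝ Set.univ φ)
    -- the gradient of φ
    (gφ : V × W → V × W)
    (hdiff : ∀ z : V × W, HasFDerivAt φ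
      (((innerSL ℝ (gφ z).1).comp (ContinuousLinearMap.fst ℝ V W))
        + ((innerSL ℝ (gφ z).2).comp (ContinuousLinearMap.snd ℝ V W))) z)
    -- the bounded self-adjoint positive semidefinite operators Q and Q̂
    (Q Qh : (V × W) →L[ℝ] (V × W))
    (hQsa : ∀ x y : V × W, prodInner (Q x) y = prodInner x (Q y))
    (hQpsd : ∀ z : V × W, 0 ≤ prodInner z (Q z))
    (hQhsa : ∀ x y : V × W, prodInner (Qh x) y = prodInner x (Qh y))
    (hQhpsd : ∀ z : V × W, 0 ≤ prodInner z (Qh z))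
    -- the minorization and majorization of φ
    (hminor : ∀ z z' : V × W,
      φ z' + prodInner (gφ z') (z - z') + (1 / 2) * prodInner (z - z') (Q (z - z')) ≤ φ z)
    (hmajor : ∀ z z' : V × W,
      φ z ≤ φ z' + prodInner (gφ z') (z - z') + (1 / 2) * prodInner (z - z') (Qh (z - z')))
    -- Q̂ = Q + Diag(D₁, D₂)
    (D₁ : V →L[ℝ] V) (D₂ : W →L[ℝ] W)
    (hD₁sa : ∀ x y : V, ⟪D₁ x, y⟫_ℝ = ⟪x, D₁ y⟫_ℝ) (hD₁psd : ∀ x : V, 0 ≤ ⟪x, D₁ x⟫_ℝ)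
    (hD₂sa : ∀ x y : W, ⟪D₂ x, y⟫_ℝ = ⟪x, D₂ y⟫_ℝ) (hD₂psd : ∀ x : W, 0 ≤ ⟪x, D₂ x⟫_ℝ)
    (hdecomp : ∀ z : V × W, Qh z = Q z + (D₁ z.1, D₂ z.2))
    -- coercivity of the diagonal blocks of Q̂
    (c₁ c₂ : ℝ) (hc₁ : 0 < c₁) (hc₂ : 0 < c₂)
    (hQh11 : ∀ v : V, c₁ * ‖v‖ ^ 2 ≤ ⟪v, (Qh (v, (0 : W))).1⟫_ℝ)
    (hQh22 : ∀ w : W, c₂ * ‖w‖ ^ 2 ≤ ⟪w, (Qh ((0 : V), w)).2⟫_ℝ)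
    -- the iterates
    (v : ℕ → V) (w : ℕ → W) (vE : ℕ → V) (wE : ℕ → W) (t : ℕ → ℝ)
    (ht1 : t 1 = 1)
    (htrec : ∀ k ≥ 1, t (k + 1) = (1 + Real.sqrt (1 + 4 * t k ^ 2)) / 2)
    (hinit : vE 1 = v 0 ∧ wE 1 = w 0 ∧ v 0 ∈ C ∧ w 0 ∈ D)
    (hvmin : ∀ k ≥ 1, v k ∈ C ∧
      IsMinOn (fun x : V => f₀ x
        + (φ (vE k, wE k) + prodInner (gφ (vE k, wE k)) ((x, wE k) - (vE k, wE k))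
          + (1 / 2) * prodInner ((x, wE k) - (vE k, wE k))
              (Qh ((x, wE k) - (vE k, wE k))))) C (v k))
    (hwmin : ∀ k ≥ 1, w k ∈ D ∧
      IsMinOn (fun y : W => g₀ y
        + (φ (vE k, wE k) + prodInner (gφ (vE k, wE k)) ((v k, y) - (vE k, wE k))
          + (1 / 2) * prodInner ((v k, y) - (vE k, wE k))
              (Qh ((v k, y) - (vE k, wE k))))) D (w k))
    (hextr : ∀ k ≥ 1,
      vE (k + 1) = v k + ((t k - 1) / t (k + 1)) • (v k - v (k - 1)) ∧
      wE (k + 1) = w k + ((t k - 1) / t (k + 1)) • (w k - w (k - 1)))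
    -- a minimizer z* of θ over C × D
    (vs : V) (ws : W) (hvs : vs ∈ C) (hws : ws ∈ D)
    (hmin : IsMinOn (fun z : V × W => f₀ z.1 + g₀ z.2 + φ z) (C ×ˢ D) (vs, ws)) :
    ∀ k ≥ 1,
      (f₀ (v k) + g₀ (w k) + φ (v k, w k)) - (f₀ vs + g₀ ws + φ (vs, ws))
        ≤ 2 * (⟪v 0 - vs, D₁ (v 0 - vs)⟫_ℝ + ⟪w 0 - ws, D₂ (w 0 - ws)⟫_ℝ
            + ⟪w 0 - ws, (Q ((0 : V), w 0 - ws)).2⟫_ℝ) / ((k : ℝ) + 1) ^ 2 := by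
  -- symmetry of `Q` as a bilinear form
  have hQsymm : ∀ a b : V × W, prodInner a (Q b) = prodInner b (Q a) := fun a b => by
    rw [← hQsa, prodInner_comm]
  -- the quadratic form `S = Diag(D₁, D₂ + Q₂₂)` as a bilinear form
  obtain ⟨Sb, hSbdef⟩ : ∃ Sb : V × W → V × W → ℝ, Sb = fun x y =>
      ⟪x.1, D₁ y.1⟫_ℝ + ⟪x.2, D₂ y.2⟫_ℝ + prodInner ((0 : V), x.2) (Q ((0 : V), y.2)) :=
    ⟨_, rfl⟩
  have hSadd : ∀ x y z : V × W, Sb (x + y) z = Sb x z + Sb y z := by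
    intro x y z
    simp only [hSbdef, Prod.fst_add, Prod.snd_add, inner_add_left]
    rw [show (((0 : V), x.2 + y.2) : V × W) = ((0 : V), x.2) + ((0 : V), y.2) by simp,
      prodInner_add_left]
    ring
  have hSsmul : ∀ (r : ℝ) (x y : V × W), Sb (r • x) y = r * Sb x y := by
    intro r x y
    simp only [hSbdef, Prod.smul_fst, Prod.smul_snd, real_inner_smul_left]
    rw [show (((0 : V), r • x.2) : V × W) = r • ((0 : V), x.2) by simp,
      prodInner_smul_left]
    ring
  have hSsymm : ∀ x y : V × W, Sb x y = Sb y x := by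
    have c1 : ∀ a b : V, ⟪a, D₁ b⟫_ℝ = ⟪b, D₁ a⟫_ℝ := fun a b => by
      rw [← hD₁sa, real_inner_comm]
    have c2 : ∀ a b : W, ⟪a, D₂ b⟫_ℝ = ⟪b, D₂ a⟫_ℝ := fun a b => by
      rw [← hD₂sa, real_inner_comm]
    intro x y
    simp only [hSbdef]
    rw [c1 x.1 y.1, c2 x.2 y.2, hQsymm ((0 : V), x.2) ((0 : V), y.2)]
  have hSpsd : ∀ x : V × W, 0 ≤ Sb x x := by
    intro x
    simp only [hSbdef]
    exact add_nonneg (add_nonneg (hD₁psd _) (hD₂psd _)) (hQpsd (((0 : V), x.2) : V × W))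
  -- decomposition of the quadratic form of Q̂
  have hBhd : ∀ z : V × W, prodInner z (Qh z)
      = prodInner z (Q z) + ⟪z.1, D₁ z.1⟫_ℝ + ⟪z.2, D₂ z.2⟫_ℝ := by
    intro z
    rw [hdecomp z, prodInner_add_right]
    simp only [prodInner]
    ring
  -- the one-step estimate (Lemma A)
  have lemA : ∀ n, 1 ≤ n → ∀ u ∈ C, ∀ x ∈ D,
      f₀ (v n) + g₀ (w n) + φ (v n, w n) ≤ f₀ u + g₀ x + φ (u, x)
        + (1 / 2) * Sb (((vE n, wE n) : V × W) - (u, x)) (((vE n, wE n) : V × W) - (u, x))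
        - (1 / 2) * Sb (((v n, w n) : V × W) - (u, x)) (((v n, w n) : V × W) - (u, x)) := by
    intro n hn u hu x hx
    obtain ⟨hvC, hvm⟩ := hvmin n hn
    obtain ⟨hwD, hwm⟩ := hwmin n hn
    have haff1 : ∀ (aa bb : V) (l : ℝ),
        ((((1 - l) • aa + l • bb : V), wE n) : V × W) - (vE n, wE n)
          = (1 - l) • (((aa, wE n) : V × W) - (vE n, wE n))
            + l • (((bb, wE n) : V × W) - (vE n, wE n)) := by
      intro aa bb l
      simp only [Prod.mk_sub_mk, Prod.smul_mk, Prod.mk_add_mk, Prod.mk.injEq]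
      exact ⟨by module, by module⟩
    have haff2 : ∀ (aa bb : W) (l : ℝ),
        (((v n : V), ((1 - l) • aa + l • bb : W)) : V × W) - (vE n, wE n)
          = (1 - l) • (((v n, aa) : V × W) - (vE n, wE n))
            + l • (((v n, bb) : V × W) - (vE n, wE n)) := by
      intro aa bb l
      simp only [Prod.mk_sub_mk, Prod.smul_mk, Prod.mk_add_mk, Prod.mk.injEq]
      exact ⟨by module, by module⟩
    have H1 := strong_min_aux hCcv hf₀ (gφ (vE n, wE n)) Qh hQhsa (φ (vE n, wE n))
      (fun xx : V => ((xx, wE n) : V × W) - (vE n, wE n)) haff1 hvC hvm hu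
    have H2 := strong_min_aux hDcv hg₀ (gφ (vE n, wE n)) Qh hQhsa (φ (vE n, wE n))
      (fun yy : W => ((v n, yy) : V × W) - (vE n, wE n)) haff2 hwD hwm hx
    have H3 := hmajor ((v n, w n) : V × W) ((vE n, wE n) : V × W)
    have H4 := hminor ((u, x) : V × W) ((vE n, wE n) : V × W)
    obtain ⟨p, hp⟩ : ∃ p : V, p = u - vE n := ⟨_, rfl⟩
    obtain ⟨d, hd⟩ : ∃ d : V, d = v n - vE n := ⟨_, rfl⟩
    obtain ⟨r, hr⟩ : ∃ r : W, r = x - wE n := ⟨_, rfl⟩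
    obtain ⟨s, hs⟩ : ∃ s : W, s = w n - wE n := ⟨_, rfl⟩
    have hv1 : ((u, wE n) : V × W) - (vE n, wE n) = (p, (0 : W)) := by
      simp [hp, Prod.mk_sub_mk]
    have hv2 : ((v n, wE n) : V × W) - (vE n, wE n) = (d, (0 : W)) := by
      simp [hd, Prod.mk_sub_mk]
    have hv3 : ((v n, x) : V × W) - (vE n, wE n) = (d, r) := by
      simp [hd, hr, Prod.mk_sub_mk]
    have hv4 : ((v n, w n) : V × W) - (vE n, wE n) = (d, s) := by
      simp [hd, hs, Prod.mk_sub_mk]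
    have hv5 : ((u, x) : V × W) - (vE n, wE n) = (p, r) := by
      simp [hp, hr, Prod.mk_sub_mk]
    have hv6 : ((p, (0 : W)) : V × W) - ((d, (0 : W)) : V × W) = (p - d, (0 : W)) := by
      simp [Prod.mk_sub_mk]
    have hv7 : ((d, r) : V × W) - ((d, s) : V × W) = ((0 : V), r - s) := by
      simp [Prod.mk_sub_mk]
    rw [hv1, hv2, hv6] at H1
    rw [hv4, hv3, hv7] at H2
    rw [hv4] at H3
    rw [hv5] at H4
    have hlin : prodInner (gφ (vE n, wE n)) ((p, (0 : W)) : V × W)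
        + prodInner (gφ (vE n, wE n)) ((d, r) : V × W)
        - prodInner (gφ (vE n, wE n)) ((d, (0 : W)) : V × W)
        = prodInner (gφ (vE n, wE n)) ((p, r) : V × W) := by
      simp only [prodInner]
      simp only [inner_zero_right]
      ring
    have hQ1 := quad_id1 (fun a b : V × W => prodInner a (Q b))
      (fun a b c => prodInner_add_left a b (Q c))
      (fun rr a b => prodInner_smul_left rr a (Q b))
      hQsymm
      ((p, (0 : W)) : V × W) ((d, (0 : W)) : V × W) (((0 : V), r) : V × W)
      (((0 : V), s) : V × W)
    simp only [Prod.mk_add_mk, Prod.mk_sub_mk, add_zero, zero_add, sub_zero, sub_self] at hQ1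
    have hDe1 : ⟪d - p, D₁ (d - p)⟫_ℝ = ⟪p - d, D₁ (p - d)⟫_ℝ := by
      rw [show d - p = -(p - d) by abel, map_neg, inner_neg_neg]
    have hDe2 : ⟪s - r, D₂ (s - r)⟫_ℝ = ⟪r - s, D₂ (r - s)⟫_ℝ := by
      rw [show s - r = -(r - s) by abel, map_neg, inner_neg_neg]
    have hid : - prodInner ((p, r) : V × W) (Q ((p, r) : V × W))
        + prodInner ((p, (0 : W)) : V × W) (Qh ((p, (0 : W)) : V × W))
        + prodInner ((d, r) : V × W) (Qh ((d, r) : V × W))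
        - prodInner ((d, (0 : W)) : V × W) (Qh ((d, (0 : W)) : V × W))
        - prodInner ((p - d, (0 : W)) : V × W) (Qh ((p - d, (0 : W)) : V × W))
        - prodInner (((0 : V), r - s) : V × W) (Qh (((0 : V), r - s) : V × W))
        = Sb ((p, r) : V × W) ((p, r) : V × W)
          - Sb ((d - p, s - r) : V × W) ((d - p, s - r) : V × W)
          - prodInner ((p - d, r) : V × W) (Q ((p - d, r) : V × W)) := by
      simp only [hBhd, hSbdef]
      simp only [map_zero, inner_zero_left, inner_zero_right, zero_add, add_zero]
      linarith [hQ1, hDe1, hDe2]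
    have hv8 : ((vE n, wE n) : V × W) - (u, x) = -((p, r) : V × W) := by
      simp only [Prod.mk_sub_mk, Prod.neg_mk, Prod.mk.injEq]
      exact ⟨by rw [hp]; abel, by rw [hr]; abel⟩
    have hv9 : ((v n, w n) : V × W) - (u, x) = ((d - p, s - r) : V × W) := by
      simp only [Prod.mk_sub_mk, Prod.mk.injEq]
      exact ⟨by rw [hd, hp]; abel, by rw [hs, hr]; abel⟩
    have hSneg : Sb (-((p, r) : V × W)) (-((p, r) : V × W))
        = Sb ((p, r) : V × W) ((p, r) : V × W) := by
      rw [show -((p, r) : V × W) = (-1 : ℝ) • ((p, r) : V × W) by rw [neg_one_smul]]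
      rw [hSsmul, hSsymm, hSsmul, hSsymm]
      ring
    rw [hv8, hv9, hSneg]
    have hpsd := hQpsd ((p - d, r) : V × W)
    linarith [H1, H2, H3, H4, hlin, hid, hpsd]
  -- properties of the t-sequence
  have ht2 : ∀ n, 1 ≤ n → 1 ≤ t n ∧ ((n : ℝ) + 1) / 2 ≤ t n := by
    intro n hn
    induction n, hn using Nat.le_induction with
    | base => rw [ht1]; norm_num
    | succ n hn ih =>
      rw [htrec n hn]
      have hs : Real.sqrt (4 * t n ^ 2) ≤ Real.sqrt (1 + 4 * t n ^ 2) :=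
        Real.sqrt_le_sqrt (by linarith)
      have hs2 : Real.sqrt (4 * t n ^ 2) = 2 * t n := by
        rw [show 4 * t n ^ 2 = (2 * t n) ^ 2 by ring, Real.sqrt_sq (by linarith [ih.1])]
      constructor
      · nlinarith [ih.1, hs, hs2]
      · push_cast
        nlinarith [ih.2, hs, hs2]
  have htid : ∀ n, 1 ≤ n → t (n + 1) ^ 2 - t (n + 1) = t n ^ 2 := by
    intro n hn
    rw [htrec n hn]
    have h4 : (0 : ℝ) ≤ 1 + 4 * t n ^ 2 := by positivity
    have hsq := Real.sq_sqrt h4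
    nlinarith [hsq]
  -- the energy sequence
  obtain ⟨U, hUdef⟩ : ∃ U : ℕ → V × W, U = fun n =>
      t n • ((v n, w n) : V × W) - (t n - 1) • ((v (n - 1), w (n - 1)) : V × W)
        - ((vs, ws) : V × W) := ⟨_, rfl⟩
  have key : ∀ n, 1 ≤ n →
      t n ^ 2 * ((f₀ (v n) + g₀ (w n) + φ (v n, w n)) - (f₀ vs + g₀ ws + φ (vs, ws)))
        + (1 / 2) * Sb (U n) (U n)
      ≤ (1 / 2) * Sb (((v 0, w 0) : V × W) - (vs, ws)) (((v 0, w 0) : V × W) - (vs, ws)) := by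
    intro n hn
    induction n, hn using Nat.le_induction with
    | base =>
      obtain ⟨hv1', hw1', hv0C, hw0D⟩ := hinit
      have hA := lemA 1 le_rfl vs hvs ws hws
      rw [hv1', hw1'] at hA
      have hU1 : U 1 = ((v 1, w 1) : V × W) - (vs, ws) := by
        simp [hUdef, ht1]
      rw [ht1, hU1, one_pow, one_mul]
      linarith [hA]
    | succ n hn ih =>
      have hn1 : 1 ≤ n + 1 := Nat.le_succ_of_le hn
      have hT1 : 1 ≤ t (n + 1) := (ht2 (n + 1) hn1).1
      have hT0 : 0 < t (n + 1) := by linarith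
      obtain ⟨he1, he2⟩ := hextr n hn
      have hβ : t (n + 1) * ((t n - 1) / t (n + 1)) = t n - 1 :=
        mul_div_cancel₀ _ (ne_of_gt hT0)
      have hzE : ((vE (n + 1), wE (n + 1)) : V × W)
          = ((v n, w n) : V × W)
            + ((t n - 1) / t (n + 1)) • (((v n, w n) : V × W) - (v (n - 1), w (n - 1))) := by
        rw [he1, he2]
        simp only [Prod.mk_sub_mk, Prod.smul_mk, Prod.mk_add_mk]
      have hUn : U n = t (n + 1) • ((vE (n + 1), wE (n + 1)) : V × W)
          - (t (n + 1) - 1) • ((v n, w n) : V × W) - ((vs, ws) : V × W) := by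
        rw [hzE, smul_add, smul_smul, hβ]
        simp only [hUdef]
        module
      have hUn1 : U (n + 1) = t (n + 1) • ((v (n + 1), w (n + 1)) : V × W)
          - (t (n + 1) - 1) • ((v n, w n) : V × W) - ((vs, ws) : V × W) := by
        simp only [hUdef, Nat.add_sub_cancel]
      have hA1 := lemA (n + 1) hn1 vs hvs ws hws
      have hA2 := lemA (n + 1) hn1 (v n) (hvmin n hn).1 (w n) (hwmin n hn).1
      have hfi := bilin_fista Sb hSadd hSsmul hSsymm (t (n + 1))
        ((vE (n + 1), wE (n + 1)) : V × W) ((v (n + 1), w (n + 1)) : V × W)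
        ((v n, w n) : V × W) ((vs, ws) : V × W)
      rw [← hUn, ← hUn1] at hfi
      have htid' := htid n hn
      have h2' := mul_le_mul_of_nonneg_left hA2
        (mul_nonneg (by linarith : (0:ℝ) ≤ t (n + 1)) (by linarith : (0:ℝ) ≤ t (n + 1) - 1))
      have h1' := mul_le_mul_of_nonneg_left hA1 (le_of_lt hT0)
      have hsub : t n ^ 2 * ((f₀ (v n) + g₀ (w n) + φ (v n, w n))
            - (f₀ vs + g₀ ws + φ (vs, ws)))
          = (t (n + 1) ^ 2 - t (n + 1)) * ((f₀ (v n) + g₀ (w n) + φ (v n, w n))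
            - (f₀ vs + g₀ ws + φ (vs, ws))) := by
        rw [htid']
      linarith only [ih, hfi, h1', h2', hsub]
  -- conclusion
  intro k hk
  have hK := key k hk
  have hmem : ((v k, w k) : V × W) ∈ C ×ˢ D :=
    Set.mem_prod.mpr ⟨(hvmin k hk).1, (hwmin k hk).1⟩
  have ha0 : 0 ≤ (f₀ (v k) + g₀ (w k) + φ (v k, w k)) - (f₀ vs + g₀ ws + φ (vs, ws)) := by
    have := isMinOn_iff.mp hmin ((v k, w k) : V × W) hmem
    simp only at this
    linarith [this]
  have hSU : 0 ≤ Sb (U k) (U k) := hSpsd _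
  have htk := (ht2 k hk).2
  have htk0 : (0 : ℝ) ≤ ((k : ℝ) + 1) / 2 := by positivity
  have hS0 : Sb (((v 0, w 0) : V × W) - (vs, ws)) (((v 0, w 0) : V × W) - (vs, ws))
      = ⟪v 0 - vs, D₁ (v 0 - vs)⟫_ℝ + ⟪w 0 - ws, D₂ (w 0 - ws)⟫_ℝ
        + ⟪w 0 - ws, (Q ((0 : V), w 0 - ws)).2⟫_ℝ := by
    simp only [hSbdef, Prod.mk_sub_mk]
    simp only [prodInner, inner_zero_left, zero_add]
  have h1 : (((k : ℝ) + 1) / 2) ^ 2 ≤ t k ^ 2 := by nlinarith [htk, htk0]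
  have h2 := mul_le_mul_of_nonneg_right h1 ha0
  have hkpos : (0 : ℝ) < ((k : ℝ) + 1) ^ 2 := by positivity
  rw [le_div_iff₀ hkpos]
  linarith [hK, hSU, h2, hS0]
end

section
/- Let (Ω, ν) be a finite measure space, H = L²(Ω; ℝ), and let A : H → H be a continuous self-adjoint linear operator. Let α, β > 0 and a ≤ 0 ≤ b be real numbers, and let y_d, y_r ∈ H. Define B_β = {λ ∈ H : |λ(x)| ≤ β for a.e. x}, σ(μ) = ∫_Ω max(a μ(x), b μ(x)) dν(x), and the dual objective Φ(λ, p, μ) = ½‖A p − y_d‖² + (1/(2α))‖p − λ − μ‖² + ⟨p, y_r⟩ + σ(μ) − ½‖y_d‖² for λ ∈ B_β (Φ = +∞ if λ ∉ B_β). Let t₁ = 1, t_{k+1} = (1 + √(1 + 4 t_k²))/2, β_k = (t_k − 1)/t_{k+1}. Given (λ⁰, p⁰, μ⁰) ∈ B_β × H × H with (λ̃¹, p̃¹, μ̃¹) = (λ⁰, p⁰, μ⁰), suppose the iterates satisfy: p̂^k is the unique minimizer over H of p ↦ ½‖A p − y_d‖² + (1/(2α))‖p − λ̃^k − μ̃^k‖²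 + ⟨p, y_r⟩; λ^k is the unique minimizer over B_β of λ ↦ (1/(2α))‖λ − (p̂^k − μ̃^k)‖²; p^k is the unique minimizer over H of p ↦ ½‖A p − y_d‖² + (1/(2α))‖p − λ^k − μ̃^k‖² + ⟨p, y_r⟩; μ^k is the unique minimizer over H of μ ↦ (1/(2α))‖μ − (p^k − λ^k)‖² + σ(μ); and (λ̃^{k+1}, p̃^{k+1}, μ̃^{k+1}) = (λ^k, p^k, μ^k) + β_k((λ^k, p^k, μ^k) − (λ^{k−1}, p^{k−1}, μ^{k−1})). If (λ*, p*, μ*) minimizes Φ, then for all k ≥ 1, Φ(λ^k, p^k, μ^k) − Φ(λ*, p*, μ*) ≤ 4τ/(k+1)², where τ = (1/(2α))⟨λ* − λ⁰, (α A² + I)⁻¹(λ* − λ⁰)⟩ + (1/(2α))‖μ* − μ⁰‖² (note α A² + I is boundedly invertible since A² is positive semidefinite). -/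
/-!
Exact minimisation in `p` before and after the `λ`-step turns one sGS sweep into a proximal
step for `Φ` in the metric `‖(λ, p, μ)‖²_S = (1/(2α))(⟨λ, (αA² + I)⁻¹ λ⟩ + ‖μ‖²)`: subtracting
the two `p`-gradient equations gives `(αA² + I)(p^k − p̂^k) = λ^k − λ̃^k`, and together with the
optimality conditions of the `λ`- and `μ`-steps this yields
`Φ(x^k) + ‖x^k − z‖²_S ≤ Φ(z) + ‖x̃^k − z‖²_S` for every feasible `z`. The FISTA energy
`t_k²(Φ(x^k) − Φ(x*)) + ‖t_k x^k − (t_k − 1) x^{k−1} − x*‖²_S` is then non-increasing because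
`t_{k+1}² − t_{k+1} = t_k²`, and `t_k ≥ (k+1)/2` gives the rate.
-/

open MeasureTheory Filter Topology Set
open scoped InnerProductSpace ENNReal

/-- The dual objective `Φ(λ, p, μ)` of the sparse optimal-control problem, restricted to
`λ ∈ B_β` (outside, `Φ = +∞`, which is encoded by constraining all minimizations to
`B_β × H × H`). -/
noncomputable def dualObj {Ω : Type*} [MeasurableSpace Ω] (ν : Measure Ω)
    (A : Lp ℝ 2 ν →L[ℝ] Lp ℝ 2 ν) (α a b : ℝ) (yd yr : Lp ℝ 2 ν)
    (lam p mu : Lp ℝ 2 ν) : ℝ :=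
  (1 / 2) * ‖A p - yd‖ ^ 2 + (1 / (2 * α)) * ‖p - lam - mu‖ ^ 2 + ⟪p, yr⟫_ℝ
    + (∫ x, max (a * mu x) (b * mu x) ∂ν) - (1 / 2) * ‖yd‖ ^ 2

theorem eq_zero_of_forall_mul_add_sq_mul_nonneg {L C : ℝ}
    (h : ∀ s : ℝ, 0 ≤ s * L + s ^ 2 * C) : L = 0 := by
  have hmin : IsLocalMin (fun s : ℝ => s * L + s ^ 2 * C) 0 :=
    Eventually.of_forall fun s => by simpa using h s
  have hderiv : HasDerivAt (fun s : ℝ => s * L + s ^ 2 * C) L 0 := by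
    simpa using ((hasDerivAt_id' 0).mul_const L).fun_add ((hasDerivAt_pow 2 0).mul_const C)
  exact hmin.hasDerivAt_eq_zero hderiv

theorem nonneg_of_forall_add_mul_nonneg {X Y : ℝ}
    (h : ∀ s : ℝ, 0 < s → s ≤ 1 → 0 ≤ X + s * Y) : 0 ≤ X := by
  have hlim : Tendsto (fun s : ℝ => X + s * Y) (𝓝[>] 0) (𝓝 X) := by
    have : Continuous fun s : ℝ => X + s * Y := by fun_prop
    simpa using this.continuousWithinAt.tendsto (s := Ioi 0) (x := 0)
  exact ge_of_tendsto hlim <| by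
    filter_upwards [Ioc_mem_nhdsGT one_pos] with s hs using h s hs.1 hs.2

namespace ContinuousLinearMap

variable {𝕜 E : Type*} [RCLike 𝕜] [NormedAddCommGroup E] [InnerProductSpace 𝕜 E]

theorem IsPositive.ring_inverse {G : E →L[𝕜] E} (hG : G.IsPositive) (hu : IsUnit G) :
    (Ring.inverse G).IsPositive := by
  have hGT : ∀ x, G (Ring.inverse G x) = x := fun x => by
    simpa using congr($(Ring.mul_inverse_cancel G hu) x)
  refine ⟨fun x y => ?_, fun x => ?_⟩
  · conv_lhs => rw [← hGT y]
    conv_rhs => rw [← hGT x]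
    exact (hG.isSymmetric _ _).symm
  · simpa [reApplyInnerSelf, hGT] using hG.re_inner_nonneg_right (Ring.inverse G x)

end ContinuousLinearMap

section Hilbert

variable {V : Type*} [NormedAddCommGroup V] [InnerProductSpace ℝ V]

theorem exists_isPositive_leftInverse_smul_sq_add_one [CompleteSpace V] {A : V →L[ℝ] V}
    (hA : (A : V →ₗ[ℝ] V).IsSymmetric) {α : ℝ} (hα : 0 ≤ α) :
    ∃ T : V →L[ℝ] V, T.IsPositive ∧ ∀ x, T (α • A (A x) + x) = x := by
  set G : V →L[ℝ] V := α • A.comp A + 1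
  have hGx : ∀ x, ⟪G x, x⟫_ℝ = α * ‖A x‖ ^ 2 + ‖x‖ ^ 2 := fun x => by
    simp [G, inner_add_left, real_inner_smul_left, hA.apply_clm]
  have hG : G.IsPositive := by
    refine (ContinuousLinearMap.isPositive_iff G).2 ⟨fun x y => ?_, fun x => ?_⟩
    · simp [G, inner_add_left, inner_add_right, real_inner_smul_left, real_inner_smul_right,
        hA.apply_clm]
    · rw [hGx]; positivity
  have hu : IsUnit G := G.isUnit_of_forall_le_norm_inner_map one_pos fun x => by
    rw [hGx, Real.norm_eq_abs, abs_of_nonneg (by positivity)]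
    have : 0 ≤ α * ‖A x‖ ^ 2 := by positivity
    simp only [NNReal.coe_one, mul_one]
    linarith
  refine ⟨Ring.inverse G, hG.ring_inverse hu, fun x => ?_⟩
  simpa [G] using congr($(Ring.inverse_mul_cancel G hu) x)

theorem inner_sub_add_sub_nonneg_of_forall_le {K : Set V} {h : V → ℝ} (hh : ConvexOn ℝ K h)
    {α : ℝ} {c x : V} (hx : x ∈ K)
    (hmin : ∀ y ∈ K, (1 / (2 * α)) * ‖x - c‖ ^ 2 + h x ≤ (1 / (2 * α)) * ‖y - c‖ ^ 2 + h y)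
    {y : V} (hy : y ∈ K) : 0 ≤ (1 / α) * ⟪x - c, y - x⟫_ℝ + h y - h x := by
  refine nonneg_of_forall_add_mul_nonneg (Y := (1 / (2 * α)) * ‖y - x‖ ^ 2) fun s hs0 hs1 => ?_
  have hseg : (1 - s) • x + s • y - c = (x - c) + s • (y - x) := by module
  have hconv : h ((1 - s) • x + s • y) ≤ (1 - s) * h x + s * h y :=
    hh.2 hx hy (by linarith) hs0.le (by ring)
  have hmem : (1 - s) • x + s • y ∈ K := hh.1 hx hy (by linarith) hs0.le (by ring)
  have hle := hmin _ hmem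
  rw [hseg, norm_add_sq_real, inner_smul_right, norm_smul, Real.norm_eq_abs, mul_pow,
    sq_abs] at hle
  have hα' : 1 / α = 2 * (1 / (2 * α)) := by ring
  have key : 0 ≤ s * ((1 / α) * ⟪x - c, y - x⟫_ℝ + h y - h x
      + s * ((1 / (2 * α)) * ‖y - x‖ ^ 2)) := by
    rw [hα']
    linear_combination hle + hconv
  exact nonneg_of_mul_nonneg_right (by linarith) hs0

theorem inner_sub_apply_sub_eq {T : V →L[ℝ] V} (hT : (T : V →ₗ[ℝ] V).IsSymmetric) (x x' y : V) :
    ⟪x' - y, T (x' - y)⟫_ℝ =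
      ⟪x - y, T (x - y)⟫_ℝ + ⟪x - x', T (x - x')⟫_ℝ + 2 * ⟪T (x - x'), y - x⟫_ℝ := by
  have hx' : x' - y = (x - y) - (x - x') := by abel
  have hy : y - x = -(x - y) := by abel
  have hsymm : ⟪x - y, T (x - x')⟫_ℝ = ⟪x - x', T (x - y)⟫_ℝ := by
    rw [← hT.apply_clm, real_inner_comm]
  rw [hx', hy, map_sub, inner_neg_right, inner_sub_left, inner_sub_right, inner_sub_right, hsymm,
    hT.apply_clm (x - x') (x - y)]
  ring

noncomputable section SmoothPart

variable (A : V →L[ℝ] V) (α : ℝ) (yd yr : V)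

/-- The smooth part of `Φ`, which depends on `(λ, μ)` only through `w = λ + μ`. -/
def smoothPart (w q : V) : ℝ :=
  (1 / 2) * ‖A q - yd‖ ^ 2 + (1 / (2 * α)) * ‖q - w‖ ^ 2 + ⟪q, yr⟫_ℝ

def smoothPartGrad (w q : V) : V :=
  A (A q - yd) + (1 / α) • (q - w) + yr

variable {A}

theorem smoothPart_add_add (hA : (A : V →ₗ[ℝ] V).IsSymmetric) (w q e u : V) :
    smoothPart A α yd yr (w + e) (q + u) =
      smoothPart A α yd yr w q + ⟪smoothPartGrad A α yd yr w q, u⟫_ℝ - (1 / α) * ⟪q - w, e⟫_ℝ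
        + (1 / 2) * ‖A u‖ ^ 2 + (1 / (2 * α)) * ‖u - e‖ ^ 2 := by
  have hq : q + u - (w + e) = (q - w) + (u - e) := by abel
  have hAq : A (q + u) - yd = (A q - yd) + A u := by rw [map_add]; abel
  simp only [smoothPart, smoothPartGrad, hq, hAq, norm_add_sq_real, inner_add_left,
    inner_sub_right, real_inner_smul_left]
  rw [hA.apply_clm (A q - yd) u, real_inner_comm yr u]
  ring

theorem smoothPartGrad_eq_zero_of_forall_le (hA : (A : V →ₗ[ℝ] V).IsSymmetric) {w q : V}
    (hmin : ∀ q', smoothPart A α yd yr w q ≤ smoothPart A α yd yr w q') :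
    smoothPartGrad A α yd yr w q = 0 := by
  set g := smoothPartGrad A α yd yr w q
  refine inner_self_eq_zero.mp <|
    eq_zero_of_forall_mul_add_sq_mul_nonneg (C := (1 / 2) * ‖A g‖ ^ 2 + (1 / (2 * α)) * ‖g‖ ^ 2)
      fun s => ?_
  have h := hmin (q + s • g)
  rw [← add_zero w, smoothPart_add_add α yd yr hA] at h
  simp only [add_zero, inner_zero_right, sub_zero, map_smul, norm_smul, real_inner_smul_right,
    Real.norm_eq_abs, mul_pow, sq_abs] at h
  linarith

theorem smoothPart_sub_smoothPart_le (hA : (A : V →ₗ[ℝ] V).IsSymmetric) (hα : 0 ≤ α)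
    {w q : V} (hgrad : smoothPartGrad A α yd yr w q = 0) (e w' q' : V) :
    smoothPart A α yd yr (w + e) q - smoothPart A α yd yr w' q'
      ≤ (1 / α) * ⟪q - w, w' - (w + e)⟫_ℝ + (1 / (2 * α)) * ‖e‖ ^ 2 := by
  have he := smoothPart_add_add α yd yr hA w q e 0
  have hw' := smoothPart_add_add α yd yr hA w q (w' - w) (q' - q)
  rw [add_zero, hgrad, inner_zero_left, map_zero, norm_zero, zero_sub, norm_neg] at he
  rw [add_sub_cancel, add_sub_cancel, hgrad, inner_zero_left] at hw'
  have : 0 ≤ (1 / 2) * ‖A (q' - q)‖ ^ 2 + (1 / (2 * α)) * ‖q' - q - (w' - w)‖ ^ 2 := by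
    positivity
  rw [show w' - (w + e) = (w' - w) - e by abel, inner_sub_right, he, hw']
  linarith

theorem apply_sub_eq_of_smoothPartGrad_eq_zero (hα : α ≠ 0) {T : V →L[ℝ] V}
    (hTG : ∀ x, T (α • A (A x) + x) = x) {w q w' q' : V}
    (hgrad : smoothPartGrad A α yd yr w q = 0) (hgrad' : smoothPartGrad A α yd yr w' q' = 0) :
    T (w - w') = q - q' := by
  have h : α • (smoothPartGrad A α yd yr w q - smoothPartGrad A α yd yr w' q') =
      α • A (A (q - q')) + (q - q') - (w - w') := by
    simp only [smoothPartGrad, map_sub, smul_sub, smul_add, smul_smul, mul_one_div_cancel hα,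
      one_smul]
    abel
  rw [hgrad, hgrad', sub_zero, smul_zero, eq_comm, sub_eq_zero] at h
  rw [← h, hTG]

end SmoothPart

theorem sgs_descent {A : V →L[ℝ] V} {α : ℝ} {yd yr : V} (hA : (A : V →ₗ[ℝ] V).IsSymmetric)
    (hα : 0 < α) {K : Set V} (hK : Convex ℝ K) {σ : V → ℝ} (hσ : ConvexOn ℝ univ σ)
    {T : V →L[ℝ] V} (hT : T.IsPositive) (hTG : ∀ x, T (α • A (A x) + x) = x)
    {lamE muE phat lam p mu : V}
    (hphat : ∀ q, smoothPart A α yd yr (lamE + muE) phat ≤ smoothPart A α yd yr (lamE + muE) q)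
    (hlamK : lam ∈ K)
    (hlam : ∀ l ∈ K, (1 / (2 * α)) * ‖lam - (phat - muE)‖ ^ 2
      ≤ (1 / (2 * α)) * ‖l - (phat - muE)‖ ^ 2)
    (hp : ∀ q, smoothPart A α yd yr (lam + muE) p ≤ smoothPart A α yd yr (lam + muE) q)
    (hmu : ∀ m, (1 / (2 * α)) * ‖mu - (p - lam)‖ ^ 2 + σ mu
      ≤ (1 / (2 * α)) * ‖m - (p - lam)‖ ^ 2 + σ m)
    {l : V} (hl : l ∈ K) (q m : V) :
    smoothPart A α yd yr (lam + mu) p + σ mu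
        + (1 / (2 * α)) * (⟪lam - l, T (lam - l)⟫_ℝ + ‖mu - m‖ ^ 2)
      ≤ smoothPart A α yd yr (l + m) q + σ m
        + (1 / (2 * α)) * (⟪lamE - l, T (lamE - l)⟫_ℝ + ‖muE - m‖ ^ 2) := by
  obtain ⟨r, hr⟩ : ∃ r, r = p - (lam + muE) := ⟨_, rfl⟩
  have hgrad := smoothPartGrad_eq_zero_of_forall_le α yd yr hA hp
  have hdelta : T (lam - lamE) = p - phat := by
    simpa only [add_sub_add_right_eq_sub] using apply_sub_eq_of_smoothPartGrad_eq_zero α yd yr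
      hα.ne' hTG hgrad (smoothPartGrad_eq_zero_of_forall_le α yd yr hA hphat)
  have hlamVI : 0 ≤ (1 / α) * (⟪T (lam - lamE), l - lam⟫_ℝ - ⟪r, l - lam⟫_ℝ) := by
    have h := inner_sub_add_sub_nonneg_of_forall_le (convexOn_const 0 hK) hlamK
      (by simpa using hlam) hl
    rw [show lam - (phat - muE) = T (lam - lamE) - r by rw [hr, hdelta]; abel,
      inner_sub_left] at h
    linarith
  have hmuVI : 0 ≤ (1 / α) * (⟪mu - muE, m - mu⟫_ℝ - ⟪r, m - mu⟫_ℝ) + σ m - σ mu := by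
    have h := inner_sub_add_sub_nonneg_of_forall_le hσ (mem_univ mu) (fun m _ => hmu m)
      (mem_univ m)
    rwa [show mu - (p - lam) = (mu - muE) - r by rw [hr]; abel, inner_sub_left] at h
  have hsmooth : smoothPart A α yd yr (lam + mu) p - smoothPart A α yd yr (l + m) q
      ≤ (1 / α) * (⟪r, l - lam⟫_ℝ + ⟪r, m - mu⟫_ℝ) + (1 / (2 * α)) * ‖mu - muE‖ ^ 2 := by
    have h := smoothPart_sub_smoothPart_le α yd yr hA hα.le hgrad (mu - muE) (l + m) q
    rwa [show lam + muE + (mu - muE) = lam + mu by abel, ← hr,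
      show l + m - (lam + mu) = (l - lam) + (m - mu) by abel, inner_add_right] at h
  have hlamExpand := inner_sub_apply_sub_eq hT.isSymmetric lam lamE l
  have hmuExpand := inner_sub_apply_sub_eq (T := ContinuousLinearMap.id ℝ V) LinearMap.IsSymmetric.id
    mu muE m
  simp only [ContinuousLinearMap.id_apply, real_inner_self_eq_norm_sq] at hmuExpand
  have hgap := mul_nonneg (by positivity : 0 ≤ 1 / (2 * α)) (hT.inner_nonneg_right (lam - lamE))
  have hα' : 1 / α = 2 * (1 / (2 * α)) := by ring
  rw [hα'] at hlamVI hmuVI hsmooth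
  rw [hlamExpand, hmuExpand]
  linarith

noncomputable def proxForm (α : ℝ) (T : V →L[ℝ] V) : LinearMap.BilinForm ℝ (V × V × V) :=
  (1 / (2 * α)) • ((innerₗ V).compl₁₂ (LinearMap.fst ℝ V (V × V))
      ((T : V →ₗ[ℝ] V) ∘ₗ LinearMap.fst ℝ V (V × V))
    + (innerₗ V).compl₁₂ (LinearMap.snd ℝ V V ∘ₗ LinearMap.snd ℝ V (V × V))
      (LinearMap.snd ℝ V V ∘ₗ LinearMap.snd ℝ V (V × V)))

theorem proxForm_apply (α : ℝ) (T : V →L[ℝ] V) (z z' : V × V × V) :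
    proxForm α T z z' = (1 / (2 * α)) * (⟪z.1, T z'.1⟫_ℝ + ⟪z.2.2, z'.2.2⟫_ℝ) := by
  simp [proxForm, mul_add]

theorem proxForm_self_nonneg {α : ℝ} (hα : 0 ≤ α) {T : V →L[ℝ] V} (hT : T.IsPositive)
    (z : V × V × V) : 0 ≤ proxForm α T z z := by
  rw [proxForm_apply]
  exact mul_nonneg (by positivity) (add_nonneg (hT.inner_nonneg_right _) real_inner_self_nonneg)

end Hilbert

section Fista

variable {E : Type*} [AddCommGroup E] [Module ℝ E]

theorem LinearMap.BilinForm.fista_identity (B : LinearMap.BilinForm ℝ E) (t : ℝ)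
    (u v c d : E) :
    t * ((t - 1) * (B (u - c) (u - c) - B (v - c) (v - c))
        + (B (u - d) (u - d) - B (v - d) (v - d)))
      = B (t • u - (t - 1) • c - d) (t • u - (t - 1) • c - d)
        - B (t • v - (t - 1) • c - d) (t • v - (t - 1) • c - d) := by
  simp only [map_sub, map_smul, LinearMap.sub_apply, LinearMap.smul_apply, smul_eq_mul]
  ring

theorem fista_sq_sub_self {s τ : ℝ} (h : τ = (1 + √(1 + 4 * s ^ 2)) / 2) :
    τ ^ 2 - τ = s ^ 2 := by
  have hsq := Real.sq_sqrt (by positivity : (0 : ℝ) ≤ 1 + 4 * s ^ 2)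
  rw [h]
  linear_combination hsq / 4

theorem fista_half_succ_le {t : ℕ → ℝ} (ht1 : t 1 = 1)
    (htrec : ∀ k ≥ 1, t (k + 1) = (1 + √(1 + 4 * t k ^ 2)) / 2) {k : ℕ} (hk : 1 ≤ k) :
    ((k : ℝ) + 1) / 2 ≤ t k := by
  induction k, hk using Nat.le_induction with
  | base => rw [ht1]; norm_num
  | succ n hn ih =>
    have htn : 0 ≤ 2 * t n := by
      have : (1 : ℝ) ≤ n := by exact_mod_cast hn
      linarith
    have hsqrt : 2 * t n ≤ √(1 + 4 * t n ^ 2) :=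
      Real.le_sqrt_of_sq_le (by nlinarith)
    rw [htrec n hn]
    push_cast
    linarith

def fistaEnergy (B : LinearMap.BilinForm ℝ E) (Φ : E → ℝ) (z : E) (x : ℕ → E) (t : ℕ → ℝ)
    (k : ℕ) : ℝ :=
  t k ^ 2 * (Φ (x k) - Φ z)
    + B (t k • x k - (t k - 1) • x (k - 1) - z) (t k • x k - (t k - 1) • x (k - 1) - z)

theorem fistaEnergy_succ_le (B : LinearMap.BilinForm ℝ E) (Φ : E → ℝ) (z : E) (x xE : ℕ → E)
    (t : ℕ → ℝ) {n : ℕ} (ht : 1 ≤ t (n + 1)) (htsq : t (n + 1) ^ 2 - t (n + 1) = t n ^ 2)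
    (hextr : xE (n + 1) = x n + ((t n - 1) / t (n + 1)) • (x n - x (n - 1)))
    (hprev : Φ (x (n + 1)) + B (x (n + 1) - x n) (x (n + 1) - x n)
      ≤ Φ (x n) + B (xE (n + 1) - x n) (xE (n + 1) - x n))
    (hstar : Φ (x (n + 1)) + B (x (n + 1) - z) (x (n + 1) - z)
      ≤ Φ z + B (xE (n + 1) - z) (xE (n + 1) - z)) :
    fistaEnergy B Φ z x t (n + 1) ≤ fistaEnergy B Φ z x t n := by
  have hpoint : t (n + 1) • xE (n + 1) - (t (n + 1) - 1) • x n - z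
      = t n • x n - (t n - 1) • x (n - 1) - z := by
    rw [hextr, smul_add, smul_smul, mul_div_cancel₀ _ (by linarith : t (n + 1) ≠ 0)]
    module
  have hid := B.fista_identity (t (n + 1)) (x (n + 1)) (xE (n + 1)) (x n) z
  rw [hpoint] at hid
  simp only [fistaEnergy, Nat.add_sub_cancel]
  have h1 := mul_le_mul_of_nonneg_left hprev (by linarith : 0 ≤ t (n + 1) - 1)
  have h2 := mul_le_mul_of_nonneg_left (add_le_add h1 hstar) (by linarith : 0 ≤ t (n + 1))
  have hΦn := congrArg (· * Φ (x n)) htsq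
  have hΦz := congrArg (· * Φ z) htsq
  linarith

theorem fistaEnergy_le (B : LinearMap.BilinForm ℝ E) (Φ : E → ℝ) (K : Set E) (x xE : ℕ → E)
    (t : ℕ → ℝ) (ht1 : t 1 = 1) (htrec : ∀ k ≥ 1, t (k + 1) = (1 + √(1 + 4 * t k ^ 2)) / 2)
    (hxE1 : xE 1 = x 0)
    (hextr : ∀ k ≥ 1, xE (k + 1) = x k + ((t k - 1) / t (k + 1)) • (x k - x (k - 1)))
    (hxK : ∀ k ≥ 1, x k ∈ K)
    (hdesc : ∀ k ≥ 1, ∀ y ∈ K, Φ (x k) + B (x k - y) (x k - y) ≤ Φ y + B (xE k - y) (xE k - y))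
    {z : E} (hz : z ∈ K) {k : ℕ} (hk : 1 ≤ k) :
    fistaEnergy B Φ z x t k ≤ B (x 0 - z) (x 0 - z) := by
  induction k, hk using Nat.le_induction with
  | base =>
    have h := hdesc 1 le_rfl z hz
    simp only [fistaEnergy, ht1, hxE1] at h ⊢
    simp only [one_pow, one_mul, sub_self, zero_smul, one_smul, sub_zero]
    linarith
  | succ n hn ih =>
    refine le_trans (fistaEnergy_succ_le B Φ z x xE t ?_ (fista_sq_sub_self (htrec n hn))
      (hextr n hn) (hdesc (n + 1) (by omega) (x n) (hxK n hn)) (hdesc (n + 1) (by omega) z hz)) ih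
    have := fista_half_succ_le ht1 htrec (k := n + 1) (by omega)
    push_cast at this
    have : (1 : ℝ) ≤ n := by exact_mod_cast hn
    linarith

theorem fista_rate (B : LinearMap.BilinForm ℝ E) (hB : ∀ x, 0 ≤ B x x) (Φ : E → ℝ) (K : Set E)
    (x xE : ℕ → E) (t : ℕ → ℝ) (ht1 : t 1 = 1)
    (htrec : ∀ k ≥ 1, t (k + 1) = (1 + √(1 + 4 * t k ^ 2)) / 2) (hxE1 : xE 1 = x 0)
    (hextr : ∀ k ≥ 1, xE (k + 1) = x k + ((t k - 1) / t (k + 1)) • (x k - x (k - 1)))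
    (hxK : ∀ k ≥ 1, x k ∈ K)
    (hdesc : ∀ k ≥ 1, ∀ y ∈ K, Φ (x k) + B (x k - y) (x k - y) ≤ Φ y + B (xE k - y) (xE k - y))
    {z : E} (hz : z ∈ K) (hmin : ∀ y ∈ K, Φ z ≤ Φ y) {k : ℕ} (hk : 1 ≤ k) :
    Φ (x k) - Φ z ≤ 4 * B (x 0 - z) (x 0 - z) / ((k : ℝ) + 1) ^ 2 := by
  have henergy := fistaEnergy_le B Φ K x xE t ht1 htrec hxE1 hextr hxK hdesc hz hk
  have hgap : 0 ≤ Φ (x k) - Φ z := sub_nonneg.mpr (hmin _ (hxK k hk))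
  have ht := fista_half_succ_le ht1 htrec hk
  have htsq : ((k : ℝ) + 1) ^ 2 / 4 ≤ t k ^ 2 := by
    have : 0 ≤ ((k : ℝ) + 1) / 2 := by positivity
    nlinarith
  rw [le_div_iff₀ (by positivity)]
  unfold fistaEnergy at henergy
  linarith [hB (t k • x k - (t k - 1) • x (k - 1) - z), mul_le_mul_of_nonneg_left htsq hgap]

end Fista

section Lp

variable {Ω : Type*} [MeasurableSpace Ω] {ν : Measure Ω} {p : ℝ≥0∞}

theorem convex_setOf_ae_abs_le (β : ℝ) : Convex ℝ {l : Lp ℝ p ν | ∀ᵐ x ∂ν, |l x| ≤ β} := by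
  intro u hu v hv s t hs ht hst
  filter_upwards [hu, hv, Lp.coeFn_add (s • u) (t • v), Lp.coeFn_smul s u, Lp.coeFn_smul t v]
    with x hux hvx hadd hsu htv
  rw [hadd, Pi.add_apply, hsu, htv, Pi.smul_apply, Pi.smul_apply, smul_eq_mul, smul_eq_mul]
  calc |s * u x + t * v x| ≤ s * |u x| + t * |v x| := by
        simpa [abs_mul, abs_of_nonneg hs, abs_of_nonneg ht] using abs_add_le (s * u x) (t * v x)
    _ ≤ s * β + t * β := by gcongr
    _ = β := by rw [← add_mul, hst, one_mul]

theorem convexOn_integral_max_mul [IsFiniteMeasure ν] [Fact (1 ≤ p)] (a b : ℝ) :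
    ConvexOn ℝ univ (fun m : Lp ℝ p ν => ∫ x, max (a * m x) (b * m x) ∂ν) := by
  have hφ : ConvexOn ℝ univ (fun y : ℝ => max (a * y) (b * y)) :=
    ((LinearMap.mulLeft ℝ a).convexOn convex_univ).sup
      ((LinearMap.mulLeft ℝ b).convexOn convex_univ)
  have hint : ∀ m : Lp ℝ p ν, Integrable (fun x => max (a * m x) (b * m x)) ν := fun m =>
    have hm := (Lp.memLp m).integrable Fact.out
    (hm.const_mul a).sup (hm.const_mul b)
  refine ⟨convex_univ, fun u _ v _ s t hs ht hst => ?_⟩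
  have hcoe : ∀ᵐ x ∂ν, (s • u + t • v : Lp ℝ p ν) x = s * u x + t * v x := by
    filter_upwards [Lp.coeFn_add (s • u) (t • v), Lp.coeFn_smul s u, Lp.coeFn_smul t v]
      with x hadd hsu htv
    rw [hadd, Pi.add_apply, hsu, htv, Pi.smul_apply, Pi.smul_apply, smul_eq_mul, smul_eq_mul]
  calc ∫ x, max (a * (s • u + t • v : Lp ℝ p ν) x) (b * (s • u + t • v : Lp ℝ p ν) x) ∂ν
      ≤ ∫ x, (s * max (a * u x) (b * u x) + t * max (a * v x) (b * v x)) ∂ν := by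
        refine integral_mono_ae (hint _) (((hint u).const_mul s).add ((hint v).const_mul t)) ?_
        filter_upwards [hcoe] with x hx
        rw [hx]
        exact hφ.2 (mem_univ _) (mem_univ _) hs ht hst
    _ = s • ∫ x, max (a * u x) (b * u x) ∂ν + t • ∫ x, max (a * v x) (b * v x) ∂ν := by
        rw [integral_add ((hint u).const_mul s) ((hint v).const_mul t), integral_const_mul,
          integral_const_mul, smul_eq_mul, smul_eq_mul]

theorem dualObj_eq_smoothPart (A : Lp ℝ 2 ν →L[ℝ] Lp ℝ 2 ν) (α a b : ℝ)
    (yd yr lam q mu : Lp ℝ 2 ν) :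
    dualObj ν A α a b yd yr lam q mu = smoothPart A α yd yr (lam + mu) q
      + (∫ x, max (a * mu x) (b * mu x) ∂ν) - (1 / 2) * ‖yd‖ ^ 2 := by
  simp only [dualObj, smoothPart, sub_sub]

end Lp

theorem sGS_mABCD_convergence_L2_general
    {Ω : Type*} [MeasurableSpace Ω] (ν : Measure Ω) [IsFiniteMeasure ν]
    (A : Lp ℝ 2 ν →L[ℝ] Lp ℝ 2 ν)
    (hA : ∀ f g : Lp ℝ 2 ν, ⟪A f, g⟫_ℝ = ⟪f, A g⟫_ℝ)
    (α β a b : ℝ) (hα : 0 < α)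
    (yd yr : Lp ℝ 2 ν)
    -- the box `B_β`
    (Bβ : Set (Lp ℝ 2 ν)) (hBβ : Bβ = {l : Lp ℝ 2 ν | ∀ᵐ x ∂ν, |l x| ≤ β})
    -- iterates and extrapolated points
    (lam p mu phat lamE pE muE : ℕ → Lp ℝ 2 ν) (t : ℕ → ℝ)
    (ht1 : t 1 = 1)
    (htrec : ∀ k ≥ 1, t (k + 1) = (1 + Real.sqrt (1 + 4 * t k ^ 2)) / 2)
    (hinit : lamE 1 = lam 0 ∧ pE 1 = p 0 ∧ muE 1 = mu 0 ∧ lam 0 ∈ Bβ)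
    (hphat : ∀ k ≥ 1, ∀ q : Lp ℝ 2 ν,
      (1 / 2) * ‖A (phat k) - yd‖ ^ 2 + (1 / (2 * α)) * ‖phat k - lamE k - muE k‖ ^ 2
          + ⟪phat k, yr⟫_ℝ
        ≤ (1 / 2) * ‖A q - yd‖ ^ 2 + (1 / (2 * α)) * ‖q - lamE k - muE k‖ ^ 2 + ⟪q, yr⟫_ℝ)
    (hlam : ∀ k ≥ 1, lam k ∈ Bβ ∧ ∀ l ∈ Bβ,
      (1 / (2 * α)) * ‖lam k - (phat k - muE k)‖ ^ 2
        ≤ (1 / (2 * α)) * ‖l - (phat k - muE k)‖ ^ 2)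
    (hp : ∀ k ≥ 1, ∀ q : Lp ℝ 2 ν,
      (1 / 2) * ‖A (p k) - yd‖ ^ 2 + (1 / (2 * α)) * ‖p k - lam k - muE k‖ ^ 2
          + ⟪p k, yr⟫_ℝ
        ≤ (1 / 2) * ‖A q - yd‖ ^ 2 + (1 / (2 * α)) * ‖q - lam k - muE k‖ ^ 2 + ⟪q, yr⟫_ℝ)
    (hmu : ∀ k ≥ 1, ∀ m : Lp ℝ 2 ν,
      (1 / (2 * α)) * ‖mu k - (p k - lam k)‖ ^ 2 + (∫ x, max (a * mu k x) (b * mu k x) ∂ν)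
        ≤ (1 / (2 * α)) * ‖m - (p k - lam k)‖ ^ 2 + ∫ x, max (a * m x) (b * m x) ∂ν)
    (hextr : ∀ k ≥ 1,
      lamE (k + 1) = lam k + ((t k - 1) / t (k + 1)) • (lam k - lam (k - 1)) ∧
      pE (k + 1) = p k + ((t k - 1) / t (k + 1)) • (p k - p (k - 1)) ∧
      muE (k + 1) = mu k + ((t k - 1) / t (k + 1)) • (mu k - mu (k - 1)))
    -- a minimizer of Φ
    (lams ps mus : Lp ℝ 2 ν) (hlams : lams ∈ Bβ)
    (hmin : ∀ l ∈ Bβ, ∀ q m : Lp ℝ 2 ν,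
      dualObj ν A α a b yd yr lams ps mus ≤ dualObj ν A α a b yd yr l q m)
    -- `qv = (α A² + I)⁻¹ (λ* − λ⁰)`
    (qv : Lp ℝ 2 ν) (hqv : α • A (A qv) + qv = lams - lam 0) :
    ∀ k ≥ 1,
      dualObj ν A α a b yd yr (lam k) (p k) (mu k)
          - dualObj ν A α a b yd yr lams ps mus
        ≤ 4 * ((1 / (2 * α)) * ⟪lams - lam 0, qv⟫_ℝ
              + (1 / (2 * α)) * ‖mus - mu 0‖ ^ 2) / ((k : ℝ) + 1) ^ 2 := by
  intro k hk
  obtain ⟨T, hT, hTG⟩ := exists_isPositive_leftInverse_smul_sq_add_one hA hα.le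
  have hrate := fista_rate (proxForm α T) (proxForm_self_nonneg hα.le hT)
    (fun z => dualObj ν A α a b yd yr z.1 z.2.1 z.2.2) {z | z.1 ∈ Bβ}
    (fun k => (lam k, p k, mu k)) (fun k => (lamE k, pE k, muE k)) t ht1 htrec
    (by simp only [hinit.1, hinit.2.1, hinit.2.2.1])
    (fun k hk => by simp only [hextr k hk, Prod.mk_add_mk, Prod.mk_sub_mk, Prod.smul_mk])
    (fun k hk => (hlam k hk).1) (fun k hk z hz => ?_) (z := (lams, ps, mus)) hlams
    (fun z hz => hmin _ hz _ _) hk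
  · have hTqv : T (lams - lam 0) = qv := by rw [← hqv, hTG]
    convert hrate using 3
    simp only [proxForm_apply, Prod.mk_sub_mk]
    rw [← neg_sub lams, ← neg_sub mus, map_neg, inner_neg_neg, hTqv, inner_neg_neg,
      real_inner_self_eq_norm_sq, mul_add]
  · obtain ⟨l, q, m⟩ := z
    have h := sgs_descent hA hα (hBβ ▸ convex_setOf_ae_abs_le β) (convexOn_integral_max_mul a b)
      hT hTG (by simpa only [smoothPart, sub_sub] using hphat k hk) (hlam k hk).1 (hlam k hk).2
      (by simpa only [smoothPart, sub_sub] using hp k hk) (hmu k hk) hz q m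
    simp only [dualObj_eq_smoothPart, proxForm_apply, Prod.mk_sub_mk, real_inner_self_eq_norm_sq]
    linarith

/-- The `O(1/k²)` convergence theorem for the sGS-based majorized ABCD algorithm applied
to the dual of the sparse elliptic optimal-control problem in `L²(Ω)`. -/
theorem sGS_mABCD_convergence_L2
    {Ω : Type*} [MeasurableSpace Ω] (ν : Measure Ω) [IsFiniteMeasure ν]
    (A : Lp ℝ 2 ν →L[ℝ] Lp ℝ 2 ν)
    (hA : ∀ f g : Lp ℝ 2 ν, ⟪A f, g⟫_ℝ = ⟪f, A g⟫_ℝ)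
    (α β a b : ℝ) (hα : 0 < α) (hβ : 0 < β) (ha : a ≤ 0) (hb : 0 ≤ b)
    (yd yr : Lp ℝ 2 ν)
    -- the box `B_β`
    (Bβ : Set (Lp ℝ 2 ν)) (hBβ : Bβ = {l : Lp ℝ 2 ν | ∀ᵐ x ∂ν, |l x| ≤ β})
    -- iterates and extrapolated points
    (lam p mu phat lamE pE muE : ℕ → Lp ℝ 2 ν) (t : ℕ → ℝ)
    (ht1 : t 1 = 1)
    (htrec : ∀ k ≥ 1, t (k + 1) = (1 + Real.sqrt (1 + 4 * t k ^ 2)) / 2)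
    (hinit : lamE 1 = lam 0 ∧ pE 1 = p 0 ∧ muE 1 = mu 0 ∧ lam 0 ∈ Bβ)
    (hphat : ∀ k ≥ 1, ∀ q : Lp ℝ 2 ν,
      (1 / 2) * ‖A (phat k) - yd‖ ^ 2 + (1 / (2 * α)) * ‖phat k - lamE k - muE k‖ ^ 2
          + ⟪phat k, yr⟫_ℝ
        ≤ (1 / 2) * ‖A q - yd‖ ^ 2 + (1 / (2 * α)) * ‖q - lamE k - muE k‖ ^ 2 + ⟪q, yr⟫_ℝ)
    (hlam : ∀ k ≥ 1, lam k ∈ Bβ ∧ ∀ l ∈ Bβ,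
      (1 / (2 * α)) * ‖lam k - (phat k - muE k)‖ ^ 2
        ≤ (1 / (2 * α)) * ‖l - (phat k - muE k)‖ ^ 2)
    (hp : ∀ k ≥ 1, ∀ q : Lp ℝ 2 ν,
      (1 / 2) * ‖A (p k) - yd‖ ^ 2 + (1 / (2 * α)) * ‖p k - lam k - muE k‖ ^ 2
          + ⟪p k, yr⟫_ℝ
        ≤ (1 / 2) * ‖A q - yd‖ ^ 2 + (1 / (2 * α)) * ‖q - lam k - muE k‖ ^ 2 + ⟪q, yr⟫_ℝ)
    (hmu : ∀ k ≥ 1, ∀ m : Lp ℝ 2 ν,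
      (1 / (2 * α)) * ‖mu k - (p k - lam k)‖ ^ 2 + (∫ x, max (a * mu k x) (b * mu k x) ∂ν)
        ≤ (1 / (2 * α)) * ‖m - (p k - lam k)‖ ^ 2 + ∫ x, max (a * m x) (b * m x) ∂ν)
    (hextr : ∀ k ≥ 1,
      lamE (k + 1) = lam k + ((t k - 1) / t (k + 1)) • (lam k - lam (k - 1)) ∧
      pE (k + 1) = p k + ((t k - 1) / t (k + 1)) • (p k - p (k - 1)) ∧
      muE (k + 1) = mu k + ((t k - 1) / t (k + 1)) • (mu k - mu (k - 1)))
    -- a minimizer of Φ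
    (lams ps mus : Lp ℝ 2 ν) (hlams : lams ∈ Bβ)
    (hmin : ∀ l ∈ Bβ, ∀ q m : Lp ℝ 2 ν,
      dualObj ν A α a b yd yr lams ps mus ≤ dualObj ν A α a b yd yr l q m)
    -- `qv = (α A² + I)⁻¹ (λ* − λ⁰)`
    (qv : Lp ℝ 2 ν) (hqv : α • A (A qv) + qv = lams - lam 0) :
    ∀ k ≥ 1,
      dualObj ν A α a b yd yr (lam k) (p k) (mu k)
          - dualObj ν A α a b yd yr lams ps mus
        ≤ 4 * ((1 / (2 * α)) * ⟪lams - lam 0, qv⟫_ℝ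
              + (1 / (2 * α)) * ‖mus - mu 0‖ ^ 2) / ((k : ℝ) + 1) ^ 2 :=
  sGS_mABCD_convergence_L2_general ν A hA α β a b hα yd yr Bβ hBβ lam p mu phat lamE pE muE t ht1
    htrec hinit hphat hlam hp hmu hextr lams ps mus hlams hmin qv hqv
end

section
/- Let H be a real Hilbert space, A : H → H a continuous self-adjoint linear operator, α > 0, y_d, y_r, c, λ̃, p̃ ∈ H, and B ⊆ H a nonempty closed convex set. Define the proximal operator D₁ on H × H by D₁(λ, p) = ((1/α)(α A² + I)⁻¹ λ, 0) (which is well defined since α A² + I is boundedly invertible). Define (λ^k, p^k) by the three-step procedure: p̂ is the unique minimizer over H of p ↦ ½‖A p − y_d‖² + (1/(2α))‖p − λ̃ − c‖² + ⟨p, y_r⟩; λ^k is the unique minimizer over B of λ ↦ (1/(2α))‖λ − (p̂ − c)‖²; p^k is the unique minimizer over H of p ↦ ½‖A p − y_d‖² + (1/(2α))‖p − λ^k − c‖² + ⟨p, y_r⟩. Then (λ^k, p^k) is the unique minimizer over B × H of the function (λ, p) ↦ ½‖A p − y_d‖² + ⟨p, y_r⟩ + (1/(2α))‖−p + λ + c‖²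 + ½⟨(λ − λ̃, p − p̃), D₁(λ − λ̃, p − p̃)⟩. -/
/-!
Write `S = α A² + I`, so that `T = S⁻¹`, and `u = α A y_d - α y_r + c`. Completing the square in
`p`, `2α` times the smooth part of the objective is
`⟪p - T (u + λ), S (p - T (u + λ))⟫ + ‖λ + c‖² - ⟪u + λ, T (u + λ)⟫ + const`; in particular the
`p`-subproblems are minimized exactly at `p̂ = T (u + λ̃)` and `pᵏ = T (u + λᵏ)`. The sGS proximal
term `⟪λ - λ̃, T (λ - λ̃)⟫` cancels the quadratic part of `-⟪u + λ, T (u + λ)⟫`, and what is left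
of the `λ`-terms is `‖λ - (p̂ - c)‖² + const`. So the objective separates: its minimizers over
`B × H` are the projections of `p̂ - c` onto `B`, which is `λᵏ` alone by convexity, paired with
`T (u + λᵏ) = pᵏ`, which is forced by the positive definiteness of `S`.
-/

open scoped InnerProductSpace

theorem forall_le_and_unique_of_mul_eq_add {L P : Type*} [AddGroup P] {Φ : L → P → ℝ}
    {Q : P → ℝ} {g : L → ℝ} {φ : L → P} {B : Set L} {a K : ℝ} {l₀ : L} (ha : 0 < a)
    (hΦ : ∀ l p, a * Φ l p = Q (p - φ l) + g l + K) (hQ_zero : Q 0 = 0)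
    (hQ_pos : ∀ x, x ≠ 0 → 0 < Q x) (hl₀ : l₀ ∈ B) (hg : ∀ l ∈ B, g l₀ ≤ g l)
    (hg_unique : ∀ l ∈ B, g l ≤ g l₀ → l = l₀) :
    (∀ l ∈ B, ∀ p, Φ l₀ (φ l₀) ≤ Φ l p) ∧
      ∀ l' ∈ B, ∀ p', (∀ l ∈ B, ∀ p, Φ l' p' ≤ Φ l p) → l' = l₀ ∧ p' = φ l₀ := by
  have hQ : ∀ x, 0 ≤ Q x := fun x =>
    (eq_or_ne x 0).elim (fun hx => hx ▸ hQ_zero.ge) fun hx => (hQ_pos x hx).le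
  have hΦ₀ : a * Φ l₀ (φ l₀) = g l₀ + K := by rw [hΦ, sub_self, hQ_zero, zero_add]
  refine ⟨fun l hl p => le_of_mul_le_mul_left ?_ ha, fun l' hl' p' hmin => ?_⟩
  · rw [hΦ₀, hΦ]
    linarith [hQ (p - φ l), hg l hl]
  have hle : Q (p' - φ l') + g l' ≤ g l₀ := by
    linarith [hΦ l' p', mul_le_mul_of_nonneg_left (hmin l₀ hl₀ (φ l₀)) ha.le]
  obtain rfl : l' = l₀ := hg_unique l' hl' (by linarith [hQ (p' - φ l')])
  refine ⟨rfl, sub_eq_zero.mp (not_not.mp fun hne => ?_)⟩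
  linarith [hQ_pos _ hne]

theorem eq_of_forall_norm_sub_sq_le {F : Type*} [NormedAddCommGroup F] [InnerProductSpace ℝ F]
    {K : Set F} (hK : Convex ℝ K) {z v w : F} (hv : v ∈ K) (hw : w ∈ K)
    (hv_min : ∀ x ∈ K, ‖v - z‖ ^ 2 ≤ ‖x - z‖ ^ 2) (hwv : ‖w - z‖ ^ 2 ≤ ‖v - z‖ ^ 2) :
    w = v := by
  have hw_min : ∀ x ∈ K, ‖w - z‖ ^ 2 ≤ ‖x - z‖ ^ 2 := fun x hx => hwv.trans (hv_min x hx)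
  have variational {y : F} (hy : y ∈ K) (hy_min : ∀ x ∈ K, ‖y - z‖ ^ 2 ≤ ‖x - z‖ ^ 2) :
      ∀ x ∈ K, ⟪z - y, x - y⟫_ℝ ≤ 0 := by
    have hmin : IsMinOn (fun x => ‖z - x‖) K y := isMinOn_iff.2 fun x hx => by
      simpa only [norm_sub_rev z] using
        (pow_le_pow_iff_left₀ (norm_nonneg _) (norm_nonneg _) two_ne_zero).1 (hy_min x hx)
    exact (norm_eq_iInf_iff_real_inner_le_zero hK hy).1 (hmin.iInf_eq hy).symm
  have h : ⟪w - v, w - v⟫_ℝ = ⟪z - v, w - v⟫_ℝ + ⟪z - w, v - w⟫_ℝ := by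
    rw [← neg_sub w v, inner_neg_right, ← sub_eq_add_neg, ← inner_sub_left,
      sub_sub_sub_cancel_left]
  rw [← sub_eq_zero, ← inner_self_eq_zero (𝕜 := ℝ)]
  exact le_antisymm (h ▸ add_nonpos (variational hv hv_min w hw) (variational hw hw_min v hv))
    real_inner_self_nonneg

section RightInverse

variable {E : Type*} [NormedAddCommGroup E] [InnerProductSpace ℝ E] {S T : E →ₗ[ℝ] E}

theorem LinearMap.IsSymmetric.of_rightInverse (hS : S.IsSymmetric) (hST : ∀ x, S (T x) = x) :
    T.IsSymmetric := fun x y => by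
  conv_lhs => rw [← hST y, ← hS, hST]

theorem inner_sub_apply_sub_of_rightInverse (hS : S.IsSymmetric) (hST : ∀ x, S (T x) = x)
    (p w : E) :
    ⟪p - T w, S (p - T w)⟫_ℝ = ⟪p, S p⟫_ℝ - 2 * ⟪p, w⟫_ℝ + ⟪w, T w⟫_ℝ := by
  have hcross : ⟪T w, S p⟫_ℝ = ⟪p, w⟫_ℝ := by rw [← hS, hST, real_inner_comm]
  simp only [map_sub, inner_sub_left, inner_sub_right, hST, hcross, real_inner_comm (T w) w]
  ring

theorem eq_rightInverse_of_forall_le (hS : S.IsSymmetric) (hST : ∀ x, S (T x) = x)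
    (hS_pos : ∀ x, x ≠ 0 → 0 < ⟪x, S x⟫_ℝ) {m w : E}
    (hm : ∀ p, ⟪m, S m⟫_ℝ - 2 * ⟪m, w⟫_ℝ ≤ ⟪p, S p⟫_ℝ - 2 * ⟪p, w⟫_ℝ) : m = T w := by
  by_contra hne
  have h := hm (T w)
  rw [← add_le_add_iff_right ⟪w, T w⟫_ℝ, ← inner_sub_apply_sub_of_rightInverse hS hST,
    ← inner_sub_apply_sub_of_rightInverse hS hST, sub_self, map_zero, inner_zero_left] at h
  exact h.not_gt (hS_pos _ (sub_ne_zero.mpr hne))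

theorem inner_sub_apply_sub_sub_inner_add_apply_add (hT : T.IsSymmetric) (u v l : E) :
    ⟪l - v, T (l - v)⟫_ℝ - ⟪u + l, T (u + l)⟫_ℝ
      = ⟪v, T v⟫_ℝ - ⟪u, T u⟫_ℝ - 2 * ⟪l, T (u + v)⟫_ℝ := by
  have hvl : ⟪v, T l⟫_ℝ = ⟪l, T v⟫_ℝ := by rw [← hT, real_inner_comm]
  have hul : ⟪u, T l⟫_ℝ = ⟪l, T u⟫_ℝ := by rw [← hT, real_inner_comm]
  simp only [map_sub, map_add, inner_sub_left, inner_sub_right, inner_add_left, inner_add_right]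
  linear_combination -hvl - hul

end RightInverse

section ShiftedGram

variable {H : Type*} [NormedAddCommGroup H] [InnerProductSpace ℝ H] {A T : H →L[ℝ] H} {α : ℝ}

noncomputable def shiftedGram (A : H →L[ℝ] H) (α : ℝ) : H →L[ℝ] H := α • (A * A) + 1

@[simp]
theorem shiftedGram_apply (x : H) : shiftedGram A α x = α • A (A x) + x := rfl

theorem isSymmetric_shiftedGram (hA : (A : H →ₗ[ℝ] H).IsSymmetric) :
    (shiftedGram A α : H →ₗ[ℝ] H).IsSymmetric := fun x y => by
  simp only [ContinuousLinearMap.coe_coe, shiftedGram_apply, inner_add_left, inner_add_right,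
    real_inner_smul_left, real_inner_smul_right, hA.apply_clm]

theorem inner_shiftedGram_self (hA : (A : H →ₗ[ℝ] H).IsSymmetric) (x : H) :
    ⟪x, shiftedGram A α x⟫_ℝ = α * ‖A x‖ ^ 2 + ‖x‖ ^ 2 := by
  rw [shiftedGram_apply, inner_add_right, real_inner_smul_right, ← hA.apply_clm,
    real_inner_self_eq_norm_sq, real_inner_self_eq_norm_sq]

theorem inner_shiftedGram_self_pos (hA : (A : H →ₗ[ℝ] H).IsSymmetric) (hα : 0 ≤ α) {x : H}
    (hx : x ≠ 0) : 0 < ⟪x, shiftedGram A α x⟫_ℝ := by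
  rw [inner_shiftedGram_self hA]
  positivity

theorem two_mul_subproblem_eq (hA : (A : H →ₗ[ℝ] H).IsSymmetric) (hα : α ≠ 0) (yd yr c w p : H) :
    2 * α * (1 / 2 * ‖A p - yd‖ ^ 2 + 1 / (2 * α) * ‖p - w - c‖ ^ 2 + ⟪p, yr⟫_ℝ)
      = ⟪p, shiftedGram A α p⟫_ℝ - 2 * ⟪p, α • A yd - α • yr + c + w⟫_ℝ
        + (α * ‖yd‖ ^ 2 + ‖w + c‖ ^ 2) := by
  rw [inner_shiftedGram_self hA, sub_sub, norm_sub_sq_real, norm_sub_sq_real, hA.apply_clm]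
  simp only [inner_add_right, inner_sub_right, real_inner_smul_right]
  field_simp
  ring


theorem eq_of_forall_subproblem_le (hA : (A : H →ₗ[ℝ] H).IsSymmetric) (hα : 0 < α)
    (hT : ∀ x, shiftedGram A α (T x) = x) {yd yr c w m : H}
    (hm : ∀ p : H,
      1 / 2 * ‖A m - yd‖ ^ 2 + 1 / (2 * α) * ‖m - w - c‖ ^ 2 + ⟪m, yr⟫_ℝ
        ≤ 1 / 2 * ‖A p - yd‖ ^ 2 + 1 / (2 * α) * ‖p - w - c‖ ^ 2 + ⟪p, yr⟫_ℝ) :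
    m = T (α • A yd - α • yr + c + w) := by
  refine eq_rightInverse_of_forall_le (isSymmetric_shiftedGram hA) hT
    (fun x => inner_shiftedGram_self_pos hA hα.le) fun p => ?_
  have h := mul_le_mul_of_nonneg_left (hm p) (by positivity : (0 : ℝ) ≤ 2 * α)
  rw [two_mul_subproblem_eq hA hα.ne', two_mul_subproblem_eq hA hα.ne'] at h
  simp only [ContinuousLinearMap.coe_coe]
  linarith

theorem exists_two_mul_objective_eq (hA : (A : H →ₗ[ℝ] H).IsSymmetric) (hα : α ≠ 0)
    (hT : ∀ x, shiftedGram A α (T x) = x) (yd yr c v pt : H) :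
    ∃ K : ℝ, ∀ l p : H,
      2 * α * (1 / 2 * ‖A p - yd‖ ^ 2 + ⟪p, yr⟫_ℝ + 1 / (2 * α) * ‖-p + l + c‖ ^ 2
          + 1 / 2 * prodInner (l - v, p - pt) ((1 / α) • T (l - v), (0 : H)))
        = ⟪p - T (α • A yd - α • yr + c + l),
              shiftedGram A α (p - T (α • A yd - α • yr + c + l))⟫_ℝ
          + ‖l - (T (α • A yd - α • yr + c + v) - c)‖ ^ 2 + K := by
  set u := α • A yd - α • yr + c
  set h := T (u + v)
  have hTsymm := (isSymmetric_shiftedGram hA).of_rightInverse (T := T) hT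
  refine ⟨α * ‖yd‖ ^ 2 + ⟪v, T v⟫_ℝ - ⟪u, T u⟫_ℝ + 2 * ⟪c, h⟫_ℝ - ‖h‖ ^ 2, fun l p => ?_⟩
  have hsub := two_mul_subproblem_eq hA hα yd yr c l p
  have hcompl := inner_sub_apply_sub_of_rightInverse (isSymmetric_shiftedGram hA) hT p (u + l)
  have hcancel := inner_sub_apply_sub_sub_inner_add_apply_add hTsymm u v l
  have hnorm : ‖l - (h - c)‖ ^ 2 = ‖l + c‖ ^ 2 - 2 * ⟪l + c, h⟫_ℝ + ‖h‖ ^ 2 := by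
    rw [sub_sub_eq_add_sub, norm_sub_sq_real]
  have hneg : ‖-p + l + c‖ = ‖p - l - c‖ := by rw [← norm_neg]; congr 1; abel
  simp only [ContinuousLinearMap.coe_coe] at hcompl hcancel
  simp only [prodInner, hneg, real_inner_smul_right, inner_zero_right, add_zero, inner_add_left]
    at hnorm ⊢
  linear_combination hsub - hcompl + hcancel - hnorm + ⟪l - v, T (l - v)⟫_ℝ * mul_inv_cancel₀ hα

end ShiftedGram

theorem sGS_decomposition_general
    {H : Type*} [NormedAddCommGroup H] [InnerProductSpace ℝ H]
    (A : H →L[ℝ] H) (hA : ∀ x y : H, ⟪A x, y⟫_ℝ = ⟪x, A y⟫_ℝ)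
    (α : ℝ) (hα : 0 < α) (yd yr c lamt pt : H)
    (B : Set H) (hBconvex : Convex ℝ B)
    -- `T = (α A² + I)⁻¹`
    (T : H →L[ℝ] H)
    (hT2 : ∀ x, α • A (A (T x)) + T x = x)
    (phat lamk pk : H)
    (hphat : ∀ p : H,
      (1 / 2) * ‖A phat - yd‖ ^ 2 + (1 / (2 * α)) * ‖phat - lamt - c‖ ^ 2 + ⟪phat, yr⟫_ℝ
        ≤ (1 / 2) * ‖A p - yd‖ ^ 2 + (1 / (2 * α)) * ‖p - lamt - c‖ ^ 2 + ⟪p, yr⟫_ℝ)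
    (hlamk_mem : lamk ∈ B)
    (hlamk : ∀ l ∈ B,
      (1 / (2 * α)) * ‖lamk - (phat - c)‖ ^ 2 ≤ (1 / (2 * α)) * ‖l - (phat - c)‖ ^ 2)
    (hpk : ∀ p : H,
      (1 / 2) * ‖A pk - yd‖ ^ 2 + (1 / (2 * α)) * ‖pk - lamk - c‖ ^ 2 + ⟪pk, yr⟫_ℝ
        ≤ (1 / 2) * ‖A p - yd‖ ^ 2 + (1 / (2 * α)) * ‖p - lamk - c‖ ^ 2 + ⟪p, yr⟫_ℝ) :
    (∀ l ∈ B, ∀ p : H,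
      (1 / 2) * ‖A pk - yd‖ ^ 2 + ⟪pk, yr⟫_ℝ + (1 / (2 * α)) * ‖-pk + lamk + c‖ ^ 2
          + (1 / 2) * prodInner (lamk - lamt, pk - pt)
              ((1 / α) • T (lamk - lamt), (0 : H))
        ≤ (1 / 2) * ‖A p - yd‖ ^ 2 + ⟪p, yr⟫_ℝ + (1 / (2 * α)) * ‖-p + l + c‖ ^ 2
          + (1 / 2) * prodInner (l - lamt, p - pt) ((1 / α) • T (l - lamt), (0 : H))) ∧
    (∀ l' ∈ B, ∀ p' : H,
      (∀ l ∈ B, ∀ p : H,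
        (1 / 2) * ‖A p' - yd‖ ^ 2 + ⟪p', yr⟫_ℝ + (1 / (2 * α)) * ‖-p' + l' + c‖ ^ 2
            + (1 / 2) * prodInner (l' - lamt, p' - pt) ((1 / α) • T (l' - lamt), (0 : H))
          ≤ (1 / 2) * ‖A p - yd‖ ^ 2 + ⟪p, yr⟫_ℝ + (1 / (2 * α)) * ‖-p + l + c‖ ^ 2
            + (1 / 2) * prodInner (l - lamt, p - pt) ((1 / α) • T (l - lamt), (0 : H))) →
      l' = lamk ∧ p' = pk) := by
  have hST : ∀ x, shiftedGram A α (T x) = x := hT2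
  have hphat_eq := eq_of_forall_subproblem_le hA hα hST hphat
  obtain rfl := eq_of_forall_subproblem_le hA hα hST hpk
  obtain ⟨K, hK⟩ := exists_two_mul_objective_eq hA hα.ne' hST yd yr c lamt pt
  rw [← hphat_eq] at hK
  have hlamk_min : ∀ l ∈ B, ‖lamk - (phat - c)‖ ^ 2 ≤ ‖l - (phat - c)‖ ^ 2 := fun l hl =>
    le_of_mul_le_mul_left (hlamk l hl) (by positivity)
  refine forall_le_and_unique_of_mul_eq_add (Q := fun x => ⟪x, shiftedGram A α x⟫_ℝ)
    (by positivity) hK (by simp) (fun x => inner_shiftedGram_self_pos hA hα.le) hlamk_mem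
    hlamk_min fun l hl hle => eq_of_forall_norm_sub_sq_le hBconvex hlamk_mem hl hlamk_min hle

/-- The sGS decomposition identity for the `(λ, p)`-subproblem of the majorized ABCD
method: with the sGS proximal operator `D₁(λ, p) = ((1/α)(α A² + I)⁻¹ λ, 0)`, the
backward-forward Gauss-Seidel sweep `p̂ → λᵏ → pᵏ` produces the unique minimizer of
the coupled proximal subproblem over `B × H`. -/
theorem sGS_decomposition
    {H : Type*} [NormedAddCommGroup H] [InnerProductSpace ℝ H] [CompleteSpace H]
    (A : H →L[ℝ] H) (hA : ∀ x y : H, ⟪A x, y⟫_ℝ = ⟪x, A y⟫_ℝ)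
    (α : ℝ) (hα : 0 < α) (yd yr c lamt pt : H)
    (B : Set H) (hBne : B.Nonempty) (hBclosed : IsClosed B) (hBconvex : Convex ℝ B)
    -- `T = (α A² + I)⁻¹`
    (T : H →L[ℝ] H)
    (hT1 : ∀ x, T (α • A (A x) + x) = x) (hT2 : ∀ x, α • A (A (T x)) + T x = x)
    (phat lamk pk : H)
    (hphat : ∀ p : H,
      (1 / 2) * ‖A phat - yd‖ ^ 2 + (1 / (2 * α)) * ‖phat - lamt - c‖ ^ 2 + ⟪phat, yr⟫_ℝ
        ≤ (1 / 2) * ‖A p - yd‖ ^ 2 + (1 / (2 * α)) * ‖p - lamt - c‖ ^ 2 + ⟪p, yr⟫_ℝ)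
    (hlamk_mem : lamk ∈ B)
    (hlamk : ∀ l ∈ B,
      (1 / (2 * α)) * ‖lamk - (phat - c)‖ ^ 2 ≤ (1 / (2 * α)) * ‖l - (phat - c)‖ ^ 2)
    (hpk : ∀ p : H,
      (1 / 2) * ‖A pk - yd‖ ^ 2 + (1 / (2 * α)) * ‖pk - lamk - c‖ ^ 2 + ⟪pk, yr⟫_ℝ
        ≤ (1 / 2) * ‖A p - yd‖ ^ 2 + (1 / (2 * α)) * ‖p - lamk - c‖ ^ 2 + ⟪p, yr⟫_ℝ) :
    (∀ l ∈ B, ∀ p : H,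
      (1 / 2) * ‖A pk - yd‖ ^ 2 + ⟪pk, yr⟫_ℝ + (1 / (2 * α)) * ‖-pk + lamk + c‖ ^ 2
          + (1 / 2) * prodInner (lamk - lamt, pk - pt)
              ((1 / α) • T (lamk - lamt), (0 : H))
        ≤ (1 / 2) * ‖A p - yd‖ ^ 2 + ⟪p, yr⟫_ℝ + (1 / (2 * α)) * ‖-p + l + c‖ ^ 2
          + (1 / 2) * prodInner (l - lamt, p - pt) ((1 / α) • T (l - lamt), (0 : H))) ∧
    (∀ l' ∈ B, ∀ p' : H,
      (∀ l ∈ B, ∀ p : H,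
        (1 / 2) * ‖A p' - yd‖ ^ 2 + ⟪p', yr⟫_ℝ + (1 / (2 * α)) * ‖-p' + l' + c‖ ^ 2
            + (1 / 2) * prodInner (l' - lamt, p' - pt) ((1 / α) • T (l' - lamt), (0 : H))
          ≤ (1 / 2) * ‖A p - yd‖ ^ 2 + ⟪p, yr⟫_ℝ + (1 / (2 * α)) * ‖-p + l + c‖ ^ 2
            + (1 / 2) * prodInner (l - lamt, p - pt) ((1 / α) • T (l - lamt), (0 : H))) →
      l' = lamk ∧ p' = pk) :=
  sGS_decomposition_general A hA α hα yd yr c lamt pt B hBconvex T hT2 phat lamk pk hphat hlamk_mem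
    hlamk hpk
end

section
/- Let (Ω, ν) be a finite measure space, α > 0, and a ≤ 0 ≤ b real numbers. Define σ : L²(Ω; ℝ) → ℝ by σ(μ) = ∫_Ω max(a μ(x), b μ(x)) dν(x), and let Π_{[a,b]} : ℝ → ℝ be the clamp Π_{[a,b]}(t) = min(max(t, a), b). Then for every c ∈ L²(Ω; ℝ), the function μ ↦ (1/(2α))‖μ − c‖²_{L²} + σ(μ) has a unique minimizer over L²(Ω; ℝ), given pointwise a.e. by μ*(x) = c(x) − α Π_{[a,b]}(c(x)/α). -/
/-!
Pointwise, the objective is `F_c(t) = (t - c)² / (2α) + max (a t) (b t)`. With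
`p = Π_{[a,b]}(c/α)` and `t* = c - α p`, expanding the square gives
`F_c(t) - F_c(t*) - (t - t*)² / (2α) = (max (a t) (b t) - p t) - (max (a t*) (b t*) - p t*)`.
The first bracket is `≥ 0` because `p ∈ [a, b]`, the second vanishes by the variational
inequality of the projection `p`. Integrating this quadratic growth over `Ω` gives
`F(μ*) + ‖μ - μ*‖² / (2α) ≤ F(μ)` in `L²`, which yields minimality and uniqueness at once.
-/

open MeasureTheory

section Scalar

variable {a b : ℝ}

lemma mul_le_max_mul_of_mem_Icc {p : ℝ} (hp : p ∈ Set.Icc a b) (t : ℝ) :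
    p * t ≤ max (a * t) (b * t) := by
  rcases le_total t 0 with ht | ht
  · exact (mul_le_mul_of_nonpos_right hp.1 ht).trans (le_max_left _ _)
  · exact (mul_le_mul_of_nonneg_right hp.2 ht).trans (le_max_right _ _)

lemma min_max_mem_Icc (hab : a ≤ b) (r : ℝ) : min (max r a) b ∈ Set.Icc a b :=
  ⟨le_min (le_max_right _ _) hab, min_le_right _ _⟩

lemma sub_min_max_mul_sub_min_max_nonpos (hab : a ≤ b) (r : ℝ) {q : ℝ} (hq : q ∈ Set.Icc a b) :
    (q - min (max r a) b) * (r - min (max r a) b) ≤ 0 := by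
  obtain ⟨hqa, hqb⟩ := hq
  rcases le_total r a with hra | hra <;> rcases le_total r b with hrb | hrb
  all_goals simp only [max_eq_left, max_eq_right, min_eq_left, min_eq_right, *]
  all_goals nlinarith

variable {α : ℝ}

lemma max_mul_sub_min_max_eq (hab : a ≤ b) (hα : 0 < α) (c : ℝ) :
    max (a * (c - α * min (max (c / α) a) b)) (b * (c - α * min (max (c / α) a) b))
      = min (max (c / α) a) b * (c - α * min (max (c / α) a) b) := by
  set p := min (max (c / α) a) b
  -- `c - α p` is a positive multiple of the projection residual `c / α - p`
  have hs : c - α * p = α * (c / α - p) := by field_simp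
  have hpa := sub_min_max_mul_sub_min_max_nonpos hab (c / α) (Set.left_mem_Icc.2 hab)
  have hpb := sub_min_max_mul_sub_min_max_nonpos hab (c / α) (Set.right_mem_Icc.2 hab)
  refine le_antisymm (max_le ?_ ?_) (mul_le_max_mul_of_mem_Icc (min_max_mem_Icc hab _) _)
  all_goals rw [hs]; nlinarith

lemma prox_max_mul_quadratic_growth (hab : a ≤ b) (hα : 0 < α) (c t : ℝ) :
    (1 / (2 * α)) * ((c - α * min (max (c / α) a) b) - c) ^ 2
      + max (a * (c - α * min (max (c / α) a) b)) (b * (c - α * min (max (c / α) a) b))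
      + (1 / (2 * α)) * (t - (c - α * min (max (c / α) a) b)) ^ 2
    ≤ (1 / (2 * α)) * (t - c) ^ 2 + max (a * t) (b * t) := by
  have hopt := max_mul_sub_min_max_eq hab hα c
  have hsub := mul_le_max_mul_of_mem_Icc (min_max_mem_Icc hab (c / α)) t
  set p := min (max (c / α) a) b
  have hexpand : (1 / (2 * α)) * (t - c) ^ 2 = (1 / (2 * α)) * ((c - α * p) - c) ^ 2
      + (1 / (2 * α)) * (t - (c - α * p)) ^ 2 - p * (t - (c - α * p)) := by
    field_simp; ring
  linarith

end Scalar

lemma unique_minimizer_of_quadratic_growth {E : Type*} [MetricSpace E] {F : E → ℝ} {k : ℝ}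
    (hk : 0 < k) {y : E} (h : ∀ x, F y + k * dist x y ^ 2 ≤ F x) :
    (∀ x, F y ≤ F x) ∧ ∀ y', (∀ x, F y' ≤ F x) → y' = y := by
  refine ⟨fun x => le_trans (by nlinarith [h x]) (h x), fun y' hy' => ?_⟩
  have hdist : k * dist y' y ^ 2 ≤ 0 := by linarith [h y', hy' y]
  have hsq : dist y' y ^ 2 = 0 := le_antisymm (nonpos_of_mul_nonpos_right hdist hk) (sq_nonneg _)
  exact dist_eq_zero.1 (pow_eq_zero_iff two_ne_zero |>.1 hsq)

namespace MeasureTheory.Lp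

variable {Ω : Type*} [MeasurableSpace Ω] {ν : Measure Ω}

lemma norm_sq_eq_integral_sq (f : Lp ℝ 2 ν) : ‖f‖ ^ 2 = ∫ x, f x ^ 2 ∂ν := by
  rw [← real_inner_self_eq_norm_sq, L2.inner_def]
  simp [sq]

lemma mul_norm_sq_add_integral_le_of_ae_le {k : ℝ} {u v w : Lp ℝ 2 ν} {φ ψ : Ω → ℝ}
    (hφ : Integrable φ ν) (hψ : Integrable ψ ν)
    (h : ∀ᵐ x ∂ν, k * u x ^ 2 + φ x + k * w x ^ 2 ≤ k * v x ^ 2 + ψ x) :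
    k * ‖u‖ ^ 2 + ∫ x, φ x ∂ν + k * ‖w‖ ^ 2 ≤ k * ‖v‖ ^ 2 + ∫ x, ψ x ∂ν := by
  have hsq (f : Lp ℝ 2 ν) : Integrable (fun x => k * f x ^ 2) ν :=
    (Lp.memLp f).integrable_sq.const_mul k
  have huφ : Integrable (fun x => k * u x ^ 2 + φ x) ν := (hsq u).add hφ
  have hvψ : Integrable (fun x => k * v x ^ 2 + ψ x) ν := (hsq v).add hψ
  simp only [norm_sq_eq_integral_sq, ← integral_const_mul]
  rw [← integral_add (hsq u) hφ, ← integral_add huφ (hsq w), ← integral_add (hsq v) hψ]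
  exact integral_mono_ae (huφ.add (hsq w)) hvψ h

lemma integrable_max_mul [IsFiniteMeasure ν] (a b : ℝ) (f : Lp ℝ 2 ν) :
    Integrable (fun x => max (a * f x) (b * f x)) ν :=
  have hf : Integrable f ν := (Lp.memLp f).integrable (by norm_num)
  (hf.const_mul a).sup (hf.const_mul b)

lemma exists_ae_eq_min_max [IsFiniteMeasure ν] (p : ENNReal) (a b : ℝ) {g : Ω → ℝ}
    (hg : AEStronglyMeasurable g ν) :
    ∃ f : Lp ℝ p ν, f =ᵐ[ν] fun x => min (max (g x) a) b := by
  have hmeas : AEStronglyMeasurable (fun x => min (max (g x) a) b) ν :=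
    (hg.sup aestronglyMeasurable_const).inf aestronglyMeasurable_const
  have hbound : ∀ᵐ x ∂ν, ‖min (max (g x) a) b‖ ≤ max |a| |b| := by
    refine Filter.Eventually.of_forall fun x => abs_le.2 ⟨?_, ?_⟩
    · have hmin : -max |a| |b| ≤ min a b :=
        le_min (by linarith [neg_abs_le a, le_max_left |a| |b|])
          (by linarith [neg_abs_le b, le_max_right |a| |b|])
      exact hmin.trans (min_le_min_right b (le_max_right _ _))
    · exact (min_le_right _ _).trans ((le_abs_self b).trans (le_max_right _ _))
  exact ⟨(MemLp.of_bound hmeas _ hbound).toLp _, MemLp.coeFn_toLp _⟩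

lemma prox_objective_quadratic_growth [IsFiniteMeasure ν] {α a b : ℝ} (hα : 0 < α)
    (hab : a ≤ b) {c μs : Lp ℝ 2 ν}
    (hμs : ∀ᵐ x ∂ν, μs x = c x - α * min (max (c x / α) a) b) (μ : Lp ℝ 2 ν) :
    (1 / (2 * α)) * ‖μs - c‖ ^ 2 + ∫ x, max (a * μs x) (b * μs x) ∂ν
        + (1 / (2 * α)) * dist μ μs ^ 2
      ≤ (1 / (2 * α)) * ‖μ - c‖ ^ 2 + ∫ x, max (a * μ x) (b * μ x) ∂ν := by
  rw [_root_.dist_eq_norm]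
  refine mul_norm_sq_add_integral_le_of_ae_le (integrable_max_mul a b μs)
    (integrable_max_mul a b μ) ?_
  filter_upwards [hμs, Lp.coeFn_sub μs c, Lp.coeFn_sub μ μs, Lp.coeFn_sub μ c]
    with x hx hμsc hμμs hμc
  rw [hμsc, hμμs, hμc, Pi.sub_apply, Pi.sub_apply, Pi.sub_apply, hx]
  exact prox_max_mul_quadratic_growth hab hα (c x) (μ x)

end MeasureTheory.Lp

/-- Closed-form (Moreau-type) solution of the μ-subproblem of the majorized ABCD
algorithm: for `σ(μ) = ∫ max(a μ(x), b μ(x)) dν` (the support function of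
`U_ad = {v : a ≤ v ≤ b a.e.}`), the function `μ ↦ (1/(2α))‖μ − c‖² + σ(μ)` has a unique
minimizer over `L²(Ω)`, given a.e. by `μ*(x) = c(x) − α Π_{[a,b]}(c(x)/α)`. -/
theorem mu_subproblem_L2_closed_form
    {Ω : Type*} [MeasurableSpace Ω] (ν : Measure Ω) [IsFiniteMeasure ν]
    (α a b : ℝ) (hα : 0 < α) (ha : a ≤ 0) (hb : 0 ≤ b)
    (c : Lp ℝ 2 ν) :
    ∃ μs : Lp ℝ 2 ν,
      (∀ μ : Lp ℝ 2 ν,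
          (1 / (2 * α)) * ‖μs - c‖ ^ 2 + ∫ x, max (a * μs x) (b * μs x) ∂ν
            ≤ (1 / (2 * α)) * ‖μ - c‖ ^ 2 + ∫ x, max (a * μ x) (b * μ x) ∂ν) ∧
      (∀ μ' : Lp ℝ 2 ν,
          (∀ μ : Lp ℝ 2 ν,
            (1 / (2 * α)) * ‖μ' - c‖ ^ 2 + ∫ x, max (a * μ' x) (b * μ' x) ∂ν
              ≤ (1 / (2 * α)) * ‖μ - c‖ ^ 2 + ∫ x, max (a * μ x) (b * μ x) ∂ν) →
          μ' = μs) ∧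
      (∀ᵐ x ∂ν, μs x = c x - α * min (max (c x / α) a) b) := by
  obtain ⟨p, hp⟩ := Lp.exists_ae_eq_min_max (ν := ν) 2 a b (g := fun x => c x / α) (by fun_prop)
  set μs := c - α • p
  have hμs : ∀ᵐ x ∂ν, μs x = c x - α * min (max (c x / α) a) b := by
    filter_upwards [Lp.coeFn_sub c (α • p), Lp.coeFn_smul α p, hp] with x hsub hsmul hpx
    rw [hsub, Pi.sub_apply, hsmul, Pi.smul_apply, hpx, smul_eq_mul]
  obtain ⟨hmin, huniq⟩ := unique_minimizer_of_quadratic_growth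
    (F := fun μ : Lp ℝ 2 ν => (1 / (2 * α)) * ‖μ - c‖ ^ 2 + ∫ x, max (a * μ x) (b * μ x) ∂ν)
    (by positivity) (Lp.prox_objective_quadratic_growth hα (ha.trans hb) hμs)
  exact ⟨μs, hmin, huniq, hμs⟩
end

section
/- Let N ∈ ℕ, α > 0, s ∈ ℝ, h ∈ (0, 1], and let M, K be real symmetric N×N matrices with M positive definite and K positive semidefinite. Suppose there are constants c₁, c₂, d₂ > 0 such that c₁ h^s ‖x‖² ≤ xᵀ M x ≤ c₂ h^s ‖x‖² and xᵀ K x ≤ d₂ h^{s−2} ‖x‖² for all x ∈ ℝ^N. Then G := M + α K M⁻¹ K is symmetric positive definite and satisfies, for all x ∈ ℝ^N, c₁ h^s ‖x‖² ≤ xᵀ G x ≤ (c₂ + α d₂²/c₁) h^{s−4} ‖x‖². -/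
/-!
`G = M + α K M⁻¹ K` is `M` plus a positive semidefinite matrix, which gives positive
definiteness and the lower bound. For the upper bound, `xᵀ K M⁻¹ K x = (K x)ᵀ M⁻¹ (K x)`; the
lower bound `a ‖z‖² ≤ zᵀ M z` inverts (via `z = M⁻¹ y` and Cauchy–Schwarz) to
`a yᵀ M⁻¹ y ≤ ‖y‖²`, and writing `K = S²` with `S` the symmetric square root turns
`xᵀ K x ≤ b ‖x‖²` into `‖K x‖² ≤ b² ‖x‖²`. With `a = c₁ hˢ` and `b = d₂ h^(s-2)` one has
`b² / a = (d₂² / c₁) h^(s-4)`, and `hˢ ≤ h^(s-4)` because `h ≤ 1`.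
-/

open Matrix

namespace Matrix

variable {n : Type*} [Fintype n]

lemma IsSymm.dotProduct_mul_mul_mulVec {R : Type*} [CommSemiring R] {K : Matrix n n R}
    (hK : K.IsSymm) (A : Matrix n n R) (x : n → R) :
    x ⬝ᵥ ((K * A * K) *ᵥ x) = (K *ᵥ x) ⬝ᵥ (A *ᵥ (K *ᵥ x)) := by
  rw [mul_assoc, ← mulVec_mulVec, dotProduct_mulVec, ← mulVec_transpose, hK.eq, mulVec_mulVec]

lemma dotProduct_add_smul_mul_mul_mulVec {M K : Matrix n n ℝ} {α : ℝ} (hK : K.IsSymm)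
    (A : Matrix n n ℝ) (x : n → ℝ) :
    x ⬝ᵥ ((M + α • (K * A * K)) *ᵥ x) = x ⬝ᵥ (M *ᵥ x) + α * ((K *ᵥ x) ⬝ᵥ (A *ᵥ (K *ᵥ x))) := by
  rw [add_mulVec, dotProduct_add, smul_mulVec, dotProduct_smul, smul_eq_mul,
    hK.dotProduct_mul_mul_mulVec]

lemma dotProduct_self_nonneg (x : n → ℝ) : 0 ≤ x ⬝ᵥ x :=
  Finset.sum_nonneg fun i _ => mul_self_nonneg (x i)

lemma sq_dotProduct_le (x y : n → ℝ) : (x ⬝ᵥ y) ^ 2 ≤ (x ⬝ᵥ x) * (y ⬝ᵥ y) := by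
  simpa only [dotProduct, sq] using Finset.sum_mul_sq_le_sq_mul_sq Finset.univ x y

variable [DecidableEq n]

lemma PosDef.mul_dotProduct_inv_mulVec_le {M : Matrix n n ℝ} (hM : M.PosDef)
    {a : ℝ} (hlow : ∀ x, a * (x ⬝ᵥ x) ≤ x ⬝ᵥ (M *ᵥ x)) (y : n → ℝ) :
    a * (y ⬝ᵥ (M⁻¹ *ᵥ y)) ≤ y ⬝ᵥ y := by
  set z := M⁻¹ *ᵥ y
  have hMz : M *ᵥ z = y := by
    rw [mulVec_mulVec, mul_nonsing_inv M ((isUnit_iff_isUnit_det M).1 hM.isUnit), one_mulVec]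
  have hz : a * (z ⬝ᵥ z) ≤ y ⬝ᵥ z := by simpa only [← hMz, dotProduct_comm z] using hlow z
  have hyz : 0 ≤ y ⬝ᵥ z := by
    simpa only [← hMz, dotProduct_comm (M *ᵥ z), star_trivial] using
      hM.posSemidef.dotProduct_mulVec_nonneg z
  have hcs := sq_dotProduct_le y z
  have hy := dotProduct_self_nonneg y
  rcases le_or_gt a 0 with ha | ha
  · nlinarith
  · nlinarith [mul_le_mul_of_nonneg_left hz hy, mul_le_mul_of_nonneg_left hcs ha.le]

lemma PosSemidef.exists_isSymm_mul_self_eq {K : Matrix n n ℝ} (hK : K.PosSemidef) :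
    ∃ S : Matrix n n ℝ, S.IsSymm ∧ S * S = K := by
  open scoped MatrixOrder in
  exact ⟨CFC.sqrt K, isHermitian_iff_isSymm.mp (CFC.sqrt_nonneg K).posSemidef.isHermitian,
    CFC.sqrt_mul_sqrt_self K hK.nonneg⟩

lemma PosSemidef.mulVec_dotProduct_mulVec_le {K : Matrix n n ℝ} (hK : K.PosSemidef) {b : ℝ}
    (hb : 0 ≤ b) (hup : ∀ x, x ⬝ᵥ (K *ᵥ x) ≤ b * (x ⬝ᵥ x)) (x : n → ℝ) :
    (K *ᵥ x) ⬝ᵥ (K *ᵥ x) ≤ b ^ 2 * (x ⬝ᵥ x) := by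
  obtain ⟨S, hS, rfl⟩ := hK.exists_isSymm_mul_self_eq
  have hquad (v : n → ℝ) : v ⬝ᵥ ((S * S) *ᵥ v) = (S *ᵥ v) ⬝ᵥ (S *ᵥ v) := by
    simpa only [mul_one, one_mulVec] using hS.dotProduct_mul_mul_mulVec 1 v
  calc ((S * S) *ᵥ x) ⬝ᵥ ((S * S) *ᵥ x) = (S *ᵥ x) ⬝ᵥ ((S * S) *ᵥ (S *ᵥ x)) := by
        rw [hquad, ← mulVec_mulVec]
    _ ≤ b * ((S *ᵥ x) ⬝ᵥ (S *ᵥ x)) := hup _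
    _ = b * (x ⬝ᵥ ((S * S) *ᵥ x)) := by rw [hquad]
    _ ≤ b * (b * (x ⬝ᵥ x)) := by gcongr; exact hup x
    _ = b ^ 2 * (x ⬝ᵥ x) := by ring

lemma PosDef.add_smul_mul_inv_mul {M K : Matrix n n ℝ} {α : ℝ} (hM : M.PosDef)
    (hK : K.PosSemidef) (hα : 0 ≤ α) :
    (M + α • (K * M⁻¹ * K)).PosDef := by
  refine hM.add_posSemidef (PosSemidef.smul ?_ hα)
  simpa only [hK.isHermitian.eq] using hM.inv.posSemidef.conjTranspose_mul_mul_same K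

end Matrix

theorem rayleigh_bounds_G_general
    (N : ℕ) (α s h : ℝ) (hα : 0 < α) (hh : 0 < h) (hh1 : h ≤ 1)
    (M K : Matrix (Fin N) (Fin N) ℝ)
    (hMpd : M.PosDef) (hKpsd : K.PosSemidef)
    (c₁ c₂ d₂ : ℝ) (hc₁ : 0 < c₁) (hc₂ : 0 < c₂) (hd₂ : 0 < d₂)
    (hMlow : ∀ x : Fin N → ℝ, c₁ * h ^ s * (x ⬝ᵥ x) ≤ x ⬝ᵥ (M *ᵥ x))
    (hMup : ∀ x : Fin N → ℝ, x ⬝ᵥ (M *ᵥ x) ≤ c₂ * h ^ s * (x ⬝ᵥ x))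
    (hKup : ∀ x : Fin N → ℝ, x ⬝ᵥ (K *ᵥ x) ≤ d₂ * h ^ (s - 2) * (x ⬝ᵥ x)) :
    (M + α • (K * M⁻¹ * K)).IsSymm ∧ (M + α • (K * M⁻¹ * K)).PosDef ∧
      ∀ x : Fin N → ℝ,
        c₁ * h ^ s * (x ⬝ᵥ x) ≤ x ⬝ᵥ ((M + α • (K * M⁻¹ * K)) *ᵥ x) ∧
        x ⬝ᵥ ((M + α • (K * M⁻¹ * K)) *ᵥ x) ≤ (c₂ + α * d₂ ^ 2 / c₁) * h ^ (s - 4) * (x ⬝ᵥ x) := by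
  have hG := hMpd.add_smul_mul_inv_mul hKpsd hα.le
  refine ⟨isHermitian_iff_isSymm.mp hG.isHermitian, hG, fun x => ?_⟩
  rw [dotProduct_add_smul_mul_mul_mulVec (isHermitian_iff_isSymm.mp hKpsd.isHermitian)]
  set t := (K *ᵥ x) ⬝ᵥ (M⁻¹ *ᵥ (K *ᵥ x))
  have ht : 0 ≤ t := by
    simpa only [star_trivial] using hMpd.inv.posSemidef.dotProduct_mulVec_nonneg (K *ᵥ x)
  have hx := dotProduct_self_nonneg x
  have hhs : 0 < h ^ s := Real.rpow_pos_of_pos hh s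
  have hpow : (d₂ * h ^ (s - 2)) ^ 2 = h ^ s * (d₂ ^ 2 * h ^ (s - 4)) := by
    have : h ^ (s - 2) * h ^ (s - 2) = h ^ s * h ^ (s - 4) := by
      rw [← Real.rpow_add hh, ← Real.rpow_add hh]
      ring_nf
    linear_combination d₂ ^ 2 * this
  have hKx : c₁ * h ^ s * t ≤ (d₂ * h ^ (s - 2)) ^ 2 * (x ⬝ᵥ x) :=
    (hMpd.mul_dotProduct_inv_mulVec_le hMlow _).trans
      (hKpsd.mulVec_dotProduct_mulVec_le (by positivity) hKup x)
  have ht_le : t ≤ d₂ ^ 2 / c₁ * h ^ (s - 4) * (x ⬝ᵥ x) := by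
    rw [div_mul_eq_mul_div, div_mul_eq_mul_div, le_div_iff₀ hc₁]
    refine le_of_mul_le_mul_left ?_ hhs
    linear_combination hKx + (x ⬝ᵥ x) * hpow
  have hmono : h ^ s ≤ h ^ (s - 4) := Real.rpow_le_rpow_of_exponent_ge hh hh1 (by linarith)
  constructor
  · linarith [hMlow x, mul_nonneg hα.le ht]
  · calc x ⬝ᵥ (M *ᵥ x) + α * t
        ≤ c₂ * h ^ (s - 4) * (x ⬝ᵥ x) + α * (d₂ ^ 2 / c₁ * h ^ (s - 4) * (x ⬝ᵥ x)) := by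
          gcongr
          exact (hMup x).trans (by gcongr)
      _ = (c₂ + α * d₂ ^ 2 / c₁) * h ^ (s - 4) * (x ⬝ᵥ x) := by ring

/-- Lemma 4.2: Rayleigh-quotient bounds for `G = M + α K M⁻¹ K` built from the finite
element mass matrix `M` and stiffness matrix `K`. -/
theorem rayleigh_bounds_G
    (N : ℕ) (α s h : ℝ) (hα : 0 < α) (hh : 0 < h) (hh1 : h ≤ 1)
    (M K : Matrix (Fin N) (Fin N) ℝ)
    (hMsymm : M.IsSymm) (hKsymm : K.IsSymm)
    (hMpd : M.PosDef) (hKpsd : K.PosSemidef)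
    (c₁ c₂ d₂ : ℝ) (hc₁ : 0 < c₁) (hc₂ : 0 < c₂) (hd₂ : 0 < d₂)
    (hMlow : ∀ x : Fin N → ℝ, c₁ * h ^ s * (x ⬝ᵥ x) ≤ x ⬝ᵥ (M *ᵥ x))
    (hMup : ∀ x : Fin N → ℝ, x ⬝ᵥ (M *ᵥ x) ≤ c₂ * h ^ s * (x ⬝ᵥ x))
    (hKup : ∀ x : Fin N → ℝ, x ⬝ᵥ (K *ᵥ x) ≤ d₂ * h ^ (s - 2) * (x ⬝ᵥ x)) :
    (M + α • (K * M⁻¹ * K)).IsSymm ∧ (M + α • (K * M⁻¹ * K)).PosDef ∧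
      ∀ x : Fin N → ℝ,
        c₁ * h ^ s * (x ⬝ᵥ x) ≤ x ⬝ᵥ ((M + α • (K * M⁻¹ * K)) *ᵥ x) ∧
        x ⬝ᵥ ((M + α • (K * M⁻¹ * K)) *ᵥ x) ≤ (c₂ + α * d₂ ^ 2 / c₁) * h ^ (s - 4) * (x ⬝ᵥ x) :=
  rayleigh_bounds_G_general N α s h hα hh hh1 M K hMpd hKpsd c₁ c₂ d₂ hc₁ hc₂ hd₂ hMlow hMup hKup
end

section
/- Let N ∈ ℕ, α > 0, let M be a real symmetric positive definite N×N matrix and K a real symmetric N×N matrix, and set G = M + α K M⁻¹ K. Then G is symmetric positive definite and M G⁻¹ M ⪯ M, i.e. xᵀ M G⁻¹ M x ≤ xᵀ M x for all x ∈ ℝ^N. Consequently, if in addition xᵀ M x ≤ c₂ h^s ‖x‖² for all x (with constants c₂ > 0, h > 0, s ∈ ℝ), then the largest eigenvalue of M G⁻¹ M is at most c₂ h^s. -/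
/-!
Write `G = M + D` with `D = α K M⁻¹ K`, which is positive semidefinite as a congruence of `M⁻¹`.
The Schur-complement-type identity
`M - M G⁻¹ M = (1 - G⁻¹ M)ᴴ M (1 - G⁻¹ M) + (G⁻¹ M)ᴴ D (G⁻¹ M)`
exhibits `M - M G⁻¹ M` as a sum of congruences of `M` and `D`, so `M G⁻¹ M ⪯ M` in the Loewner
order. An eigenvalue of `M G⁻¹ M` is a Rayleigh quotient, hence bounded by that of `M`.
-/

open Matrix

namespace Matrix

variable {n : Type*} [Fintype n]

section LoewnerOrder

variable {𝕜 : Type*} [RCLike 𝕜] [DecidableEq n]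

open scoped ComplexOrder MatrixOrder

lemma PosSemidef.mul_inv_mul {M K : Matrix n n 𝕜} (hM : M.PosSemidef) (hK : K.IsHermitian) :
    (K * M⁻¹ * K).PosSemidef := by
  simpa only [hK.eq] using hM.inv.conjTranspose_mul_mul_same K

lemma sub_mul_inv_mul_eq_conjTranspose {M G : Matrix n n 𝕜} (hM : M.IsHermitian)
    (hG : G.IsHermitian) (hGu : IsUnit G.det) :
    M - M * G⁻¹ * M =
      (1 - G⁻¹ * M)ᴴ * M * (1 - G⁻¹ * M) + (G⁻¹ * M)ᴴ * (G - M) * (G⁻¹ * M) := by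
  have hGinv : G⁻¹ * G = 1 := nonsing_inv_mul G hGu
  simp only [conjTranspose_sub, conjTranspose_one, conjTranspose_mul, conjTranspose_nonsing_inv,
    hM.eq, hG.eq]
  simp only [sub_mul, mul_sub, Matrix.mul_one, Matrix.one_mul, Matrix.mul_assoc]
  rw [← Matrix.mul_assoc G⁻¹ G, hGinv, Matrix.one_mul]
  abel

lemma PosSemidef.mul_inv_add_mul_le {M D : Matrix n n 𝕜} (hM : M.PosSemidef)
    (hD : D.PosSemidef) : M * (M + D)⁻¹ * M ≤ M := by
  by_cases hG : IsUnit (M + D).det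
  · rw [le_iff, sub_mul_inv_mul_eq_conjTranspose hM.isHermitian (hM.add hD).isHermitian hG,
      add_sub_cancel_left]
    exact (hM.conjTranspose_mul_mul_same _).add (hD.conjTranspose_mul_mul_same _)
  · rw [nonsing_inv_apply_not_isUnit _ hG, Matrix.mul_zero, Matrix.zero_mul]
    exact hM.nonneg

omit [DecidableEq n] in
lemma dotProduct_mulVec_le_of_le {A B : Matrix n n ℝ} (h : A ≤ B) (x : n → ℝ) :
    x ⬝ᵥ (A *ᵥ x) ≤ x ⬝ᵥ (B *ᵥ x) := by
  have := (le_iff.mp h).dotProduct_mulVec_nonneg x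
  rw [star_trivial, sub_mulVec, dotProduct_sub] at this
  linarith

end LoewnerOrder

lemma eigenvalue_le_of_dotProduct_mulVec_le {R : Type*} [Field R] [LinearOrder R]
    [IsStrictOrderedRing R] {A : Matrix n n R} {x : n → R} {μ c : R} (hx : x ≠ 0)
    (hAx : A *ᵥ x = μ • x) (hle : x ⬝ᵥ (A *ᵥ x) ≤ c * (x ⬝ᵥ x)) : μ ≤ c := by
  have hxx : 0 < x ⬝ᵥ x :=
    (Finset.sum_nonneg fun i _ => mul_self_nonneg (x i)).lt_of_ne'
      (dotProduct_self_eq_zero.not.mpr hx)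
  rw [hAx, dotProduct_smul, smul_eq_mul, mul_comm] at hle
  exact le_of_mul_le_mul_right (by linarith) hxx

end Matrix

theorem eigenvalue_bound_MGinvM_general
    (N : ℕ) (α : ℝ) (hα : 0 < α)
    (M K : Matrix (Fin N) (Fin N) ℝ)
    (hMpd : M.PosDef) (hKsymm : K.IsSymm)
    (c₂ h s : ℝ)
    (hMup : ∀ x : Fin N → ℝ, x ⬝ᵥ (M *ᵥ x) ≤ c₂ * h ^ s * (x ⬝ᵥ x)) :
    (M + α • (K * M⁻¹ * K)).IsSymm ∧ (M + α • (K * M⁻¹ * K)).PosDef ∧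
      (∀ x : Fin N → ℝ,
        x ⬝ᵥ ((M * (M + α • (K * M⁻¹ * K))⁻¹ * M) *ᵥ x) ≤ x ⬝ᵥ (M *ᵥ x)) ∧
      ∀ (μ : ℝ) (x : Fin N → ℝ), x ≠ 0 →
        (M * (M + α • (K * M⁻¹ * K))⁻¹ * M) *ᵥ x = μ • x → μ ≤ c₂ * h ^ s := by
  have hD : (α • (K * M⁻¹ * K)).PosSemidef :=
    (hMpd.posSemidef.mul_inv_mul (isHermitian_iff_isSymm.mpr hKsymm)).smul hα.le
  have hG : (M + α • (K * M⁻¹ * K)).PosDef := hMpd.add_posSemidef hD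
  have hMGM := dotProduct_mulVec_le_of_le (hMpd.posSemidef.mul_inv_add_mul_le hD)
  exact ⟨isHermitian_iff_isSymm.mp hG.isHermitian, hG, hMGM,
    fun μ x hx hμ => eigenvalue_le_of_dotProduct_mulVec_le hx hμ ((hMGM x).trans (hMup x))⟩

/-- The estimate `λ_max(M G⁻¹ M) = O(hˢ)` where `G = M + α K M⁻¹ K`: `G` is symmetric
positive definite, `M G⁻¹ M ⪯ M`, and consequently any eigenvalue of `M G⁻¹ M` is at
most `c₂ hˢ` whenever `xᵀ M x ≤ c₂ hˢ ‖x‖²` for all `x`. -/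
theorem eigenvalue_bound_MGinvM
    (N : ℕ) (α : ℝ) (hα : 0 < α)
    (M K : Matrix (Fin N) (Fin N) ℝ)
    (hMpd : M.PosDef) (hMsymm : M.IsSymm) (hKsymm : K.IsSymm)
    (c₂ h s : ℝ) (hc₂ : 0 < c₂) (hh : 0 < h)
    (hMup : ∀ x : Fin N → ℝ, x ⬝ᵥ (M *ᵥ x) ≤ c₂ * h ^ s * (x ⬝ᵥ x)) :
    (M + α • (K * M⁻¹ * K)).IsSymm ∧ (M + α • (K * M⁻¹ * K)).PosDef ∧
      (∀ x : Fin N → ℝ,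
        x ⬝ᵥ ((M * (M + α • (K * M⁻¹ * K))⁻¹ * M) *ᵥ x) ≤ x ⬝ᵥ (M *ᵥ x)) ∧
      ∀ (μ : ℝ) (x : Fin N → ℝ), x ≠ 0 →
        (M * (M + α • (K * M⁻¹ * K))⁻¹ * M) *ᵥ x = μ • x → μ ≤ c₂ * h ^ s :=
  eigenvalue_bound_MGinvM_general N α hα M K hMpd hKsymm c₂ h s hMup
end

section
/- Let N ∈ ℕ, α > 0, γ ≥ 1, s ∈ ℝ, h > 0, and let M, K, W be real symmetric N×N matrices with M positive definite, K positive semidefinite, W positive definite, satisfying xᵀ M x ≤ xᵀ W x ≤ γ xᵀ M x and xᵀ M x ≤ c₂ h^s ‖x‖² for all x ∈ ℝ^N (with constant c₂ > 0). Set G = M + α K M⁻¹ K and define the block-diagonal matrix S_h = (1/α)·Diag(M G⁻¹ M + W − M, 0, γ M W⁻¹ M) acting on ℝ^{3N}. Then S_h is symmetric positive semidefinite and its largest eigenvalue satisfies λ_max(S_h) ≤ (γ c₂/α) h^s. -/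
/-!
Everything reduces to quadratic forms. For `A` positive semidefinite and `A ≤ B` with `B`
invertible, putting `y = B⁻¹ A x` gives `xᵀ A B⁻¹ A x = yᵀ B y`, and expanding
`0 ≤ (x - y)ᵀ A (x - y)` yields `xᵀ A B⁻¹ A x ≤ xᵀ A x`. Applied with `B = G ≥ M` and `B = W ≥ M`,
this bounds both nonzero diagonal blocks of `α S_h` by `γ M ≤ γ c₂ hˢ I`, so the Rayleigh quotient of
`S_h`, and hence each of its eigenvalues, is at most `(γ c₂ / α) hˢ`.
-/

open Matrix

namespace Matrix

variable {m n : Type*} [Fintype m] [Fintype n]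

theorem dotProduct_sum_type {R : Type*} [Mul R] [AddCommMonoid R] (x y : m ⊕ n → R) :
    x ⬝ᵥ y = (x ∘ Sum.inl) ⬝ᵥ (y ∘ Sum.inl) + (x ∘ Sum.inr) ⬝ᵥ (y ∘ Sum.inr) :=
  Fintype.sum_sum_type _

theorem dotProduct_fromBlocks_zero_mulVec {R : Type*} [NonUnitalNonAssocSemiring R]
    (A : Matrix m m R) (D : Matrix n n R) (x y : m ⊕ n → R) :
    y ⬝ᵥ (fromBlocks A 0 0 D *ᵥ x) =
      (y ∘ Sum.inl) ⬝ᵥ (A *ᵥ (x ∘ Sum.inl)) + (y ∘ Sum.inr) ⬝ᵥ (D *ᵥ (x ∘ Sum.inr)) := by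
  rw [dotProduct_sum_type, fromBlocks_mulVec]
  simp [Function.comp_def]

theorem PosSemidef.fromBlocks_zero {R : Type*} [Ring R] [PartialOrder R] [StarRing R]
    [AddLeftMono R] {A : Matrix m m R} {D : Matrix n n R} (hA : A.PosSemidef)
    (hD : D.PosSemidef) : (fromBlocks A 0 0 D).PosSemidef := by
  refine .of_dotProduct_mulVec_nonneg (hA.1.fromBlocks (by simp) hD.1) fun x => ?_
  rw [dotProduct_fromBlocks_zero_mulVec]
  exact add_nonneg (hA.dotProduct_mulVec_nonneg _) (hD.dotProduct_mulVec_nonneg _)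

theorem PosSemidef.mul_inv_mul_same {R : Type*} [CommRing R] [PartialOrder R] [StarRing R]
    [DecidableEq n] {A B : Matrix n n R} (hB : B.PosSemidef) (hA : A.IsHermitian) :
    (A * B⁻¹ * A).PosSemidef := by
  simpa only [hA.eq] using hB.inv.mul_mul_conjTranspose_same A

variable {A B : Matrix n n ℝ}

theorem posSemidef_sub_of_dotProduct_mulVec_le (hA : A.IsHermitian) (hB : B.IsHermitian)
    (hAB : ∀ x, x ⬝ᵥ (A *ᵥ x) ≤ x ⬝ᵥ (B *ᵥ x)) : (B - A).PosSemidef := by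
  refine .of_dotProduct_mulVec_nonneg (hB.sub hA) fun x => ?_
  simpa [sub_mulVec, dotProduct_sub] using hAB x

theorem dotProduct_mul_inv_mul_mulVec_le [DecidableEq n] (hA : A.PosSemidef) (hB : IsUnit B)
    (hAB : ∀ x, x ⬝ᵥ (A *ᵥ x) ≤ x ⬝ᵥ (B *ᵥ x)) (x : n → ℝ) :
    x ⬝ᵥ ((A * B⁻¹ * A) *ᵥ x) ≤ x ⬝ᵥ (A *ᵥ x) := by
  set y := B⁻¹ *ᵥ (A *ᵥ x)
  have hBy : B *ᵥ y = A *ᵥ x := by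
    rw [mulVec_mulVec, mul_nonsing_inv _ ((isUnit_iff_isUnit_det B).mp hB), one_mulVec]
  have hsymm : x ⬝ᵥ (A *ᵥ y) = y ⬝ᵥ (A *ᵥ x) := by
    simpa only [show Aᵀ = A from hA.1.eq] using dotProduct_transpose_mulVec A x y
  have hlhs : x ⬝ᵥ ((A * B⁻¹ * A) *ᵥ x) = y ⬝ᵥ (B *ᵥ y) := by
    rw [mul_assoc, ← mulVec_mulVec, ← mulVec_mulVec, hsymm, hBy]
  have hdiff : 0 ≤ (x - y) ⬝ᵥ (A *ᵥ (x - y)) := by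
    simpa using hA.dotProduct_mulVec_nonneg (x - y)
  simp only [mulVec_sub, sub_dotProduct, dotProduct_sub] at hdiff
  linarith [hAB y, hBy ▸ hsymm]

theorem dotProduct_fromBlocks_zero_mulVec_le {A : Matrix m m ℝ} {D : Matrix n n ℝ} {c : ℝ}
    (hA : ∀ u, u ⬝ᵥ (A *ᵥ u) ≤ c * (u ⬝ᵥ u)) (hD : ∀ v, v ⬝ᵥ (D *ᵥ v) ≤ c * (v ⬝ᵥ v))
    (x : m ⊕ n → ℝ) : x ⬝ᵥ (fromBlocks A 0 0 D *ᵥ x) ≤ c * (x ⬝ᵥ x) := by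
  rw [dotProduct_fromBlocks_zero_mulVec, dotProduct_sum_type x x, mul_add]
  exact add_le_add (hA _) (hD _)

theorem le_of_mulVec_eq_smul_of_dotProduct_mulVec_le {c μ : ℝ}
    (hA : ∀ x, x ⬝ᵥ (A *ᵥ x) ≤ c * (x ⬝ᵥ x)) {x : n → ℝ} (hx : x ≠ 0)
    (hμ : A *ᵥ x = μ • x) : μ ≤ c := by
  have hpos : 0 < x ⬝ᵥ x :=
    (by simpa using dotProduct_star_self_nonneg x : 0 ≤ x ⬝ᵥ x).lt_of_ne
      (Ne.symm (mt dotProduct_self_eq_zero.mp hx))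
  refine le_of_mul_le_mul_right ?_ hpos
  simpa [hμ] using hA x

end Matrix

/-- The convergence-factor matrix `S_h = (1/α)·Diag(M G⁻¹ M + W − M, 0, γ M W⁻¹ M)` of the
discretized sGS-mABCD complexity bound is symmetric positive semidefinite and its largest
eigenvalue is at most `(γ c₂ / α) hˢ`. -/
theorem eigenvalue_bound_Sh
    (N : ℕ) (α γ s h : ℝ) (hα : 0 < α) (hγ : 1 ≤ γ) (hh : 0 < h)
    (M K W : Matrix (Fin N) (Fin N) ℝ)
    (hMpd : M.PosDef) (hKpsd : K.PosSemidef) (hWpd : W.PosDef)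
    (hMW : ∀ x : Fin N → ℝ, x ⬝ᵥ (M *ᵥ x) ≤ x ⬝ᵥ (W *ᵥ x))
    (hWM : ∀ x : Fin N → ℝ, x ⬝ᵥ (W *ᵥ x) ≤ γ * (x ⬝ᵥ (M *ᵥ x)))
    (c₂ : ℝ) (hc₂ : 0 < c₂)
    (hMup : ∀ x : Fin N → ℝ, x ⬝ᵥ (M *ᵥ x) ≤ c₂ * h ^ s * (x ⬝ᵥ x))
    (Sh : Matrix (Fin N ⊕ (Fin N ⊕ Fin N)) (Fin N ⊕ (Fin N ⊕ Fin N)) ℝ)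
    (hSh : Sh = Matrix.fromBlocks
      ((1 / α) • (M * (M + α • (K * M⁻¹ * K))⁻¹ * M + W - M)) 0 0
      (Matrix.fromBlocks 0 0 0 ((γ / α) • (M * W⁻¹ * M)))) :
    Sh.PosSemidef ∧
      ∀ (μ : ℝ) (x : Fin N ⊕ (Fin N ⊕ Fin N) → ℝ), x ≠ 0 →
        Sh *ᵥ x = μ • x → μ ≤ (γ * c₂ / α) * h ^ s := by
  set G := M + α • (K * M⁻¹ * K)
  have hKMK : (α • (K * M⁻¹ * K)).PosSemidef :=
    (hMpd.posSemidef.mul_inv_mul_same hKpsd.1).smul hα.le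
  have hG : G.PosDef := hMpd.add_posSemidef hKMK
  have hMG : ∀ x, x ⬝ᵥ (M *ᵥ x) ≤ x ⬝ᵥ (G *ᵥ x) := fun x => by
    simpa [G, add_mulVec] using hKMK.dotProduct_mulVec_nonneg x
  have hγα : 0 ≤ γ / α := by positivity
  have hC : 0 ≤ γ * c₂ / α * h ^ s := by positivity
  have hMC (u : Fin N → ℝ) : γ / α * (u ⬝ᵥ (M *ᵥ u)) ≤ γ * c₂ / α * h ^ s * (u ⬝ᵥ u) := by
    calc γ / α * (u ⬝ᵥ (M *ᵥ u)) ≤ γ / α * (c₂ * h ^ s * (u ⬝ᵥ u)) := by gcongr; exact hMup u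
      _ = _ := by ring
  subst hSh
  refine ⟨.fromBlocks_zero ?_ (.fromBlocks_zero PosSemidef.zero ?_), fun μ x hx hμ =>
    le_of_mulVec_eq_smul_of_dotProduct_mulVec_le ?_ hx hμ⟩
  · rw [add_sub_assoc]
    exact ((hG.posSemidef.mul_inv_mul_same hMpd.1).add
      (posSemidef_sub_of_dotProduct_mulVec_le hMpd.1 hWpd.1 hMW)).smul (one_div_nonneg.mpr hα.le)
  · exact (hWpd.posSemidef.mul_inv_mul_same hMpd.1).smul hγα
  refine dotProduct_fromBlocks_zero_mulVec_le (fun u => ?_)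
    (dotProduct_fromBlocks_zero_mulVec_le (fun v => ?_) (fun w => ?_))
  · have hMGM := dotProduct_mul_inv_mul_mulVec_le hMpd.posSemidef hG.isUnit hMG u
    simp only [smul_mulVec, dotProduct_smul, smul_eq_mul, sub_mulVec, add_mulVec,
      dotProduct_add, dotProduct_sub]
    calc 1 / α * (u ⬝ᵥ (M * G⁻¹ * M) *ᵥ u + u ⬝ᵥ W *ᵥ u - u ⬝ᵥ M *ᵥ u)
        ≤ 1 / α * (γ * (u ⬝ᵥ (M *ᵥ u))) := by gcongr; linarith [hWM u]
      _ = γ / α * (u ⬝ᵥ (M *ᵥ u)) := by ring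
      _ ≤ _ := hMC u
  · simpa using mul_nonneg hC (by simpa using dotProduct_star_self_nonneg v)
  · have hMWM := dotProduct_mul_inv_mul_mulVec_le hMpd.posSemidef hWpd.isUnit hMW w
    simp only [smul_mulVec, dotProduct_smul, smul_eq_mul]
    exact (mul_le_mul_of_nonneg_left hMWM hγα).trans (hMC w)
end

section
/- Let N ∈ ℕ, let W be a diagonal positive definite N×N real matrix, let α, γ > 0, a ≤ 0 ≤ b, and v ∈ ℝ^N. Define σ_{[a,b]}(ξ) = Σᵢ₌₁^N max(a ξᵢ, b ξᵢ) and the componentwise clamp Π_{[a,b]}(y)ᵢ = min(max(yᵢ, a), b). Then the function ξ ↦ (1/(2α))(ξ − v)ᵀ (γ W⁻¹)(ξ − v) + σ_{[a,b]}(ξ) has a unique minimizer over ℝ^N, given by ξ* = v − (α/γ) W Π_{[a,b]}((γ/α) W⁻¹ v). -/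
/-!
Since `W = diagonal d` with `d > 0`, the objective is the separable sum of the scalar functions
`gᵢ t = cᵢ/2 (t - vᵢ)² + max (a t) (b t)` with `cᵢ = γ / (α dᵢ)`, and `ξ*ᵢ = vᵢ - pᵢ / cᵢ` with
`pᵢ = Π_{[a,b]}(cᵢ vᵢ)`. The clamped value `pᵢ` is a subgradient of `t ↦ max (a t) (b t)` at
`ξ*ᵢ`, and `pᵢ = cᵢ (vᵢ - ξ*ᵢ)` is the optimality condition; together they give the quadratic
growth `gᵢ ξ*ᵢ + cᵢ/2 (t - ξ*ᵢ)² ≤ gᵢ t`, so `ξ*ᵢ` is the strict minimizer of `gᵢ`.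
-/

open Matrix

/-- Componentwise clamp of a vector to the interval `[a, b]`. -/
def clampVec {N : ℕ} (a b : ℝ) (y : Fin N → ℝ) : Fin N → ℝ :=
  fun i => min (max (y i) a) b

/-- Support function of the box `[a, b]^N` evaluated at `ξ`. -/
def boxSupport {N : ℕ} (a b : ℝ) (ξ : Fin N → ℝ) : ℝ :=
  ∑ i, max (a * ξ i) (b * ξ i)

section Scalar

variable {a b c p s v : ℝ}

lemma mul_le_max_mul_mul (hap : a ≤ p) (hpb : p ≤ b) (t : ℝ) :
    p * t ≤ max (a * t) (b * t) := by
  rcases le_total t 0 with ht | ht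
  · exact le_max_of_le_left (by nlinarith)
  · exact le_max_of_le_right (by nlinarith)

lemma sq_add_max_add_sq_le_of_subgradient (hap : a ≤ p) (hpb : p ≤ b)
    (hsub : max (a * s) (b * s) = p * s) (hopt : p = c * (v - s)) (t : ℝ) :
    c / 2 * (s - v) ^ 2 + max (a * s) (b * s) + c / 2 * (t - s) ^ 2
      ≤ c / 2 * (t - v) ^ 2 + max (a * t) (b * t) := by
  have hquad : c / 2 * (s - v) ^ 2 + p * s + c / 2 * (t - s) ^ 2
      = c / 2 * (t - v) ^ 2 + p * t := by
    rw [hopt]; ring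
  linarith [mul_le_max_mul_mul hap hpb t]

/-- Complementary slackness: the clamp only cuts at `a` (resp. `b`) when `s ≤ 0` (resp. `0 ≤ s`). -/
lemma max_mul_eq_clamp_mul (hab : a ≤ b) (hc : 0 < c)
    (hp : p = min (max (c * v) a) b) (hs : s = v - p / c) :
    max (a * s) (b * s) = p * s := by
  have hcs : c * s = c * v - p := by rw [hs]; field_simp
  rcases le_total (c * v) a with hva | hav
  · have hpa : p = a := by rw [hp, max_eq_right hva, min_eq_left hab]
    have : s ≤ 0 := by nlinarith
    rw [hpa]; exact max_eq_left (by nlinarith)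
  rcases le_total b (c * v) with hbv | hvb
  · have hpb : p = b := by rw [hp, max_eq_left (hab.trans hbv), min_eq_right hbv]
    have : 0 ≤ s := by nlinarith
    rw [hpb]; exact max_eq_right (by nlinarith)
  · have : s = 0 := by
      have hpv : p = c * v := by rw [hp, max_eq_left hav, min_eq_left hvb]
      nlinarith
    simp [this]

lemma sq_add_max_lt_of_ne_clamp_prox (hab : a ≤ b) (hc : 0 < c)
    (hs : s = v - min (max (c * v) a) b / c) {t : ℝ} (ht : t ≠ s) :
    c / 2 * (s - v) ^ 2 + max (a * s) (b * s) < c / 2 * (t - v) ^ 2 + max (a * t) (b * t) := by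
  set p := min (max (c * v) a) b with hp
  have hap : a ≤ p := le_min (le_max_right _ _) hab
  have hpb : p ≤ b := min_le_right _ _
  have hopt : p = c * (v - s) := by rw [hs]; field_simp; ring
  have hgrowth := sq_add_max_add_sq_le_of_subgradient hap hpb
    (max_mul_eq_clamp_mul hab hc hp hs) hopt t
  have : 0 < c / 2 * (t - s) ^ 2 := by
    have := sub_ne_zero.mpr ht
    positivity
  linarith

end Scalar

lemma sum_lt_sum_of_ne {ι : Type*} [Fintype ι] (f : ι → ℝ → ℝ) {x y : ι → ℝ}
    (hf : ∀ i t, t ≠ x i → f i (x i) < f i t) (hy : y ≠ x) :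
    ∑ i, f i (x i) < ∑ i, f i (y i) := by
  obtain ⟨j, hj⟩ := Function.ne_iff.mp hy
  refine Finset.sum_lt_sum (fun i _ => ?_) ⟨j, Finset.mem_univ j, hf j _ hj⟩
  by_cases hi : y i = x i
  · rw [hi]
  · exact (hf i _ hi).le

lemma isMin_and_unique_of_lt {α β : Type*} [LinearOrder β] (F : α → β) {x : α}
    (h : ∀ y, y ≠ x → F x < F y) :
    (∀ y, F x ≤ F y) ∧ ∀ x', (∀ y, F x' ≤ F y) → x' = x := by
  refine ⟨fun y => ?_, fun x' hx' => ?_⟩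
  · by_cases hy : y = x
    · rw [hy]
    · exact (h y hy).le
  · by_contra hne
    exact (h x' hne).not_ge (hx' x)

section Diagonal

variable {ι : Type*} [Fintype ι] [DecidableEq ι] {d : ι → ℝ}

lemma inv_diagonal_of_ne_zero (hd : ∀ i, d i ≠ 0) : (diagonal d)⁻¹ = diagonal d⁻¹ := by
  refine inv_eq_right_inv ?_
  rw [diagonal_mul_diagonal, ← diagonal_one]
  exact congrArg diagonal (funext fun i => mul_inv_cancel₀ (hd i))

lemma quadForm_inv_diagonal (hd : ∀ i, d i ≠ 0) (α γ : ℝ) (u : ι → ℝ) :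
    1 / (2 * α) * (u ⬝ᵥ ((γ • (diagonal d)⁻¹) *ᵥ u)) = ∑ i, γ / (α * d i) / 2 * u i ^ 2 := by
  rw [inv_diagonal_of_ne_zero hd, dotProduct, Finset.mul_sum]
  refine Finset.sum_congr rfl fun i _ => ?_
  simp only [smul_mulVec, mulVec_diagonal, Pi.smul_apply, Pi.inv_apply, smul_eq_mul]
  field_simp

end Diagonal

/-- Closed-form (weighted Moreau) solution of the transformed μ-subproblem in the
discretized sGS-majorized ABCD algorithm: the unique minimizer of
`ξ ↦ (1/(2α)) (ξ−v)ᵀ (γ W⁻¹) (ξ−v) + δ*_{[a,b]}(ξ)` is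
`ξ* = v − (α/γ) W Π_{[a,b]}((γ/α) W⁻¹ v)`. -/
theorem mu_subproblem_closed_form
    (N : ℕ) (W : Matrix (Fin N) (Fin N) ℝ) (hWdiag : W.IsDiag) (hWpd : W.PosDef)
    (α γ a b : ℝ) (hα : 0 < α) (hγ : 0 < γ) (ha : a ≤ 0) (hb : 0 ≤ b)
    (v : Fin N → ℝ) :
    (∀ ξ : Fin N → ℝ,
        (1 / (2 * α)) * ((v - (α / γ) • (W *ᵥ clampVec a b ((γ / α) • (W⁻¹ *ᵥ v))) - v) ⬝ᵥ
            ((γ • W⁻¹) *ᵥ (v - (α / γ) • (W *ᵥ clampVec a b ((γ / α) • (W⁻¹ *ᵥ v))) - v)))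
          + boxSupport a b (v - (α / γ) • (W *ᵥ clampVec a b ((γ / α) • (W⁻¹ *ᵥ v))))
        ≤ (1 / (2 * α)) * ((ξ - v) ⬝ᵥ ((γ • W⁻¹) *ᵥ (ξ - v))) + boxSupport a b ξ) ∧
    (∀ ξ' : Fin N → ℝ,
        (∀ ξ : Fin N → ℝ,
          (1 / (2 * α)) * ((ξ' - v) ⬝ᵥ ((γ • W⁻¹) *ᵥ (ξ' - v))) + boxSupport a b ξ'
            ≤ (1 / (2 * α)) * ((ξ - v) ⬝ᵥ ((γ • W⁻¹) *ᵥ (ξ - v))) + boxSupport a b ξ) →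
        ξ' = v - (α / γ) • (W *ᵥ clampVec a b ((γ / α) • (W⁻¹ *ᵥ v)))) := by
  obtain ⟨d, rfl⟩ : ∃ d, W = diagonal d := ⟨_, hWdiag.diagonal_diag.symm⟩
  have hd : ∀ i, 0 < d i := posDef_diagonal_iff.mp hWpd
  have hd0 : ∀ i, d i ≠ 0 := fun i => (hd i).ne'
  set c : Fin N → ℝ := fun i => γ / (α * d i)
  have hc : ∀ i, 0 < c i := fun i => div_pos hγ (mul_pos hα (hd i))
  have hobj : ∀ ξ : Fin N → ℝ,
      1 / (2 * α) * ((ξ - v) ⬝ᵥ ((γ • (diagonal d)⁻¹) *ᵥ (ξ - v))) + boxSupport a b ξ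
        = ∑ i, (c i / 2 * (ξ i - v i) ^ 2 + max (a * ξ i) (b * ξ i)) := fun ξ => by
    rw [quadForm_inv_diagonal hd0, boxSupport, ← Finset.sum_add_distrib]
    rfl
  have hprox : v - (α / γ) • (diagonal d *ᵥ clampVec a b ((γ / α) • ((diagonal d)⁻¹ *ᵥ v)))
      = fun i => v i - min (max (c i * v i) a) b / c i := by
    funext i
    have := hd0 i
    simp only [inv_diagonal_of_ne_zero hd0, clampVec, mulVec_diagonal,
      Pi.sub_apply, Pi.smul_apply, Pi.inv_apply, smul_eq_mul, c]
    field_simp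
  simp only [hobj, hprox]
  exact isMin_and_unique_of_lt
    (fun ξ => ∑ i, (c i / 2 * (ξ i - v i) ^ 2 + max (a * ξ i) (b * ξ i))) fun ξ hξ =>
      sum_lt_sum_of_ne (fun i t => c i / 2 * (t - v i) ^ 2 + max (a * t) (b * t))
        (fun i _ ht => sq_add_max_lt_of_ne_clamp_prox (ha.trans hb) (hc i) rfl ht) hξ
end
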